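/- arXiv:1105.0360 — 9 statements merged into one kernel-verified Lean document; each statement's English description precedes it below -/
import Mathlib

section
/- Let X be a metric space, p ∈ [1,∞), and k a positive integer. Define f : X^k → W_p(X) by f(x_1,…,x_k) = α·Σ_{i=1}^k 2^{-i}·δ_{x_i}, where α = 1/(1 − 2^{-k}). Then f is Lipschitz with constant (α/2)^{1/p} with respect to the metric d_p on X^k: W_p(f(x̄), f(ȳ)) ≤ (2^{k−1}/(2^k − 1))^{1/p} · d_p(x̄, ȳ). -/
/-!
The diagonal measure `α ∑ 2⁻ⁱ⁻¹ δ_{(xᵢ, yᵢ)}` on `X × X` is itself `powerEmbedding` of the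
paired tuple, so it couples `f(x̄)` and `f(ȳ)`. Its `p`-cost is `α ∑ 2⁻ⁱ⁻¹ d(xᵢ, yᵢ)ᵖ`, and
every weight `2⁻ⁱ⁻¹` is at most `1/2`, which gives the constant `α / 2 = 2^{k-1} / (2^k - 1)`.
-/

open MeasureTheory ENNReal

/-- `π` is a coupling of `μ` and `ν`. -/
def IsCoupling {X : Type*} [MeasurableSpace X] (μ ν : Measure X)
    (π : Measure (X × X)) : Prop :=
  π.map Prod.fst = μ ∧ π.map Prod.snd = ν

/-- The `L^p` Wasserstein distance between two measures, as the infimal `p`-cost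
over all couplings, to the power `1/p`. -/
noncomputable def Wp {X : Type*} [MetricSpace X] [MeasurableSpace X]
    (p : ℝ) (μ ν : Measure X) : ℝ≥0∞ :=
  (⨅ (π : Measure (X × X)) (_ : IsCoupling μ ν π),
    ∫⁻ z, ENNReal.ofReal (dist z.1 z.2 ^ p) ∂π) ^ (1 / p)

/-- The embedding `f : X^k → W_p(X)`, `f(x₁,…,x_k) = α ∑ 2⁻ⁱ δ_{xᵢ}` with
`α = 1/(1 - 2⁻ᵏ)`. -/
noncomputable def powerEmbedding {X : Type*} [MeasurableSpace X] (k : ℕ)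
    (x : Fin k → X) : Measure X :=
  ENNReal.ofReal ((1 - (2:ℝ) ^ (-(k:ℤ)))⁻¹) •
    ∑ i : Fin k, ENNReal.ofReal ((2:ℝ) ^ (-(i:ℤ) - 1)) • Measure.dirac (x i)

theorem Wp_le_of_isCoupling {X : Type*} [MetricSpace X] [MeasurableSpace X] {p : ℝ}
    (hp : 0 ≤ p) {μ ν : Measure X} {π : Measure (X × X)} (hπ : IsCoupling μ ν π) :
    Wp p μ ν ≤ (∫⁻ z, ENNReal.ofReal (dist z.1 z.2 ^ p) ∂π) ^ (1 / p) :=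
  ENNReal.rpow_le_rpow (iInf₂_le π hπ) (by positivity)

section PowerEmbedding

variable {Y Z : Type*} [MeasurableSpace Y] [MeasurableSpace Z]

theorem map_powerEmbedding {k : ℕ} (x : Fin k → Y) {f : Y → Z} (hf : Measurable f) :
    (powerEmbedding k x).map f = powerEmbedding k (f ∘ x) := by
  simp only [powerEmbedding, Measure.map_smul, Measure.map_finset_sum' hf.aemeasurable,
    Measure.map_dirac' hf, Function.comp_apply]

theorem isCoupling_powerEmbedding_prod {k : ℕ} (x y : Fin k → Y) :
    IsCoupling (powerEmbedding k x) (powerEmbedding k y) (powerEmbedding k fun i ↦ (x i, y i)) :=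
  ⟨map_powerEmbedding _ measurable_fst, map_powerEmbedding _ measurable_snd⟩

theorem two_zpow_neg_natCast_sub_one_le_half (i : ℕ) : (2:ℝ) ^ (-(i:ℤ) - 1) ≤ 2⁻¹ :=
  calc (2:ℝ) ^ (-(i:ℤ) - 1) ≤ 2 ^ (-1 : ℤ) := zpow_le_zpow_right₀ one_le_two (by omega)
    _ = 2⁻¹ := zpow_neg_one 2

theorem inv_one_sub_two_zpow_neg_div_two {k : ℕ} (hk : 0 < k) :
    (1 - (2:ℝ) ^ (-(k:ℤ)))⁻¹ / 2 = 2 ^ (k - 1) / (2 ^ k - 1) := by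
  obtain ⟨n, rfl⟩ := Nat.exists_eq_add_of_lt hk
  have hpos : (0:ℝ) < 2 ^ (n + 1) - 1 := by
    have : (1:ℝ) < 2 ^ (n + 1) := one_lt_pow₀ (one_lt_two : (1:ℝ) < 2) n.succ_ne_zero
    linarith
  rw [zpow_neg, zpow_natCast, Nat.add_sub_cancel]
  field_simp
  ring

theorem lintegral_powerEmbedding_le [MeasurableSingletonClass Y] {k : ℕ} (hk : 0 < k)
    (x : Fin k → Y) (g : Y → ℝ≥0∞) :
    ∫⁻ z, g z ∂powerEmbedding k x ≤
      ENNReal.ofReal (2 ^ (k - 1) / (2 ^ k - 1)) * ∑ i, g (x i) := by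
  set α : ℝ := (1 - (2:ℝ) ^ (-(k:ℤ)))⁻¹
  have hα : 0 ≤ α := inv_nonneg.2 <| sub_nonneg.2 <|
    zpow_le_one_of_nonpos₀ one_le_two (by simp)
  calc ∫⁻ z, g z ∂powerEmbedding k x
      = ENNReal.ofReal α * ∑ i : Fin k, ENNReal.ofReal ((2:ℝ) ^ (-(i:ℤ) - 1)) * g (x i) := by
        simp only [powerEmbedding, lintegral_smul_measure, lintegral_finsetSum_measure,
          lintegral_dirac, smul_eq_mul, α]
    _ ≤ ENNReal.ofReal α * ∑ i, ENNReal.ofReal 2⁻¹ * g (x i) := by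
        gcongr with i
        exact two_zpow_neg_natCast_sub_one_le_half i
    _ = ENNReal.ofReal (α / 2) * ∑ i, g (x i) := by
        rw [← Finset.mul_sum, ← mul_assoc, ← ENNReal.ofReal_mul hα, div_eq_mul_inv]
    _ = ENNReal.ofReal (2 ^ (k - 1) / (2 ^ k - 1)) * ∑ i, g (x i) := by
        rw [inv_one_sub_two_zpow_neg_div_two hk]

end PowerEmbedding

/-- the embedding of `X^k` into `W_p(X)` is Lipschitz with constant
`(2^{k-1}/(2^k-1))^{1/p}` for the metric `d_p` on `X^k`. -/
theorem stmt5 {X : Type*} [MetricSpace X] [MeasurableSpace X] [BorelSpace X]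
    (p : ℝ) (hp : 1 ≤ p) (k : ℕ) (hk : 0 < k) (x y : Fin k → X) :
    Wp p (powerEmbedding k x) (powerEmbedding k y) ≤
      ENNReal.ofReal
        (((2:ℝ) ^ (k - 1) / ((2:ℝ) ^ k - 1)) ^ (1 / p) *
          (∑ i : Fin k, dist (x i) (y i) ^ p) ^ (1 / p)) := by
  have hp0 : 0 ≤ p := zero_le_one.trans hp
  have hC : (0:ℝ) ≤ 2 ^ (k - 1) / (2 ^ k - 1) :=
    div_nonneg (by positivity) (sub_nonneg.2 (one_le_pow₀ one_le_two))
  have hS : (0:ℝ) ≤ ∑ i : Fin k, dist (x i) (y i) ^ p :=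
    Finset.sum_nonneg fun i _ ↦ Real.rpow_nonneg dist_nonneg p
  calc Wp p (powerEmbedding k x) (powerEmbedding k y)
      ≤ (∫⁻ z, ENNReal.ofReal (dist z.1 z.2 ^ p)
          ∂powerEmbedding k fun i ↦ (x i, y i)) ^ (1 / p) :=
        Wp_le_of_isCoupling hp0 (isCoupling_powerEmbedding_prod x y)
    _ ≤ (ENNReal.ofReal (2 ^ (k - 1) / (2 ^ k - 1)) *
          ∑ i, ENNReal.ofReal (dist (x i) (y i) ^ p)) ^ (1 / p) := by
        gcongr
        exact lintegral_powerEmbedding_le hk _ _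
    _ = _ := by
        rw [← ENNReal.ofReal_sum_of_nonneg fun i _ ↦ Real.rpow_nonneg dist_nonneg p,
          ← ENNReal.ofReal_mul hC,
          ENNReal.ofReal_rpow_of_nonneg (mul_nonneg hC hS) (by positivity), Real.mul_rpow hC hS]
end

section
/- Let X = {0,1} with the two points at distance 1, p ∈ [1,∞), and k ≥ 1. Suppose g : X^k → W_p(X) satisfies m·d_p(x̄,ȳ) ≤ W_p(g(x̄), g(ȳ)) ≤ M·d_p(x̄,ȳ) for all x̄, ȳ and constants m, M > 0. Then m ≤ (2^k − 1)^{−1/p} and M/m ≥ ((2^k − 1)/k)^{1/p}. -/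
open MeasureTheory ENNReal

abbrev Xb := ({0, 1} : Set ℝ)
def z0 : Xb := ⟨0, by simp⟩
def z1 : Xb := ⟨1, by simp⟩

lemma Xb_cases (x : Xb) : x = z0 ∨ x = z1 := by
  rcases x.2 with h | h
  · left; exact Subtype.ext h
  · right; exact Subtype.ext h

lemma z0_ne_z1 : z0 ≠ z1 := by
  intro h; have := congrArg Subtype.val h; simp [z0, z1] at this

lemma dist_z1_z0 : dist z1 z0 = 1 := by
  simp [z0, z1, Subtype.dist_eq, Real.dist_eq]

lemma dist_z0_z1 : dist z0 z1 = 1 := by rw [dist_comm]; exact dist_z1_z0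

lemma measure_decomp (mu : Measure Xb) :
    mu = mu {z1} • Measure.dirac z1 + mu {z0} • Measure.dirac z0 := by
  ext s hs
  simp only [Measure.coe_add, Measure.coe_smul, Pi.add_apply, Pi.smul_apply,
    Measure.dirac_apply' _ hs, smul_eq_mul]
  by_cases h0 : z0 ∈ s <;> by_cases h1 : z1 ∈ s
  · have hsu : s = {z1, z0} := by
      ext x; rcases Xb_cases x with h|h <;> simp [h, h0, h1]
    subst hsu
    rw [Set.indicator_of_mem h1, Set.indicator_of_mem h0]
    have hms : mu {z1, z0} = mu {z1} + mu {z0} := by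
      rw [Set.insert_eq, measure_union (by simp [Set.disjoint_singleton, z0_ne_z1.symm])
        (measurableSet_singleton _)]
    simp [hms]
  · have hsu : s = {z0} := by
      ext x; rcases Xb_cases x with h|h <;> simp [h, h0, h1, z0_ne_z1, (Ne.symm z0_ne_z1)]
    subst hsu
    rw [Set.indicator_of_notMem (by simpa using (Ne.symm z0_ne_z1)), Set.indicator_of_mem h0]
    simp
  · have hsu : s = {z1} := by
      ext x; rcases Xb_cases x with h|h <;> simp [h, h0, h1, z0_ne_z1, (Ne.symm z0_ne_z1)]
    subst hsu
    rw [Set.indicator_of_mem h1, Set.indicator_of_notMem (by simpa using z0_ne_z1)]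
    simp
  · have hsu : s = ∅ := by
      ext x; rcases Xb_cases x with h|h <;> simp [h, h0, h1]
    subst hsu; simp

lemma prob_sum (μ : Measure Xb) [IsProbabilityMeasure μ] : μ {z1} + μ {z0} = 1 := by
  have hu : (Set.univ : Set Xb) = {z1, z0} := by
    ext x; rcases Xb_cases x with h|h <;> simp [h]
  have : μ Set.univ = 1 := measure_univ
  rw [hu, Set.insert_eq, measure_union (by simp [Set.disjoint_singleton, z0_ne_z1.symm])
    (measurableSet_singleton _)] at this
  exact this

section
variable (p : ℝ)

lemma cost_eval (hp : 1 ≤ p) (x y : Xb) :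
    ENNReal.ofReal (dist x y ^ p) = if x = y then 0 else 1 := by
  have hp0 : p ≠ 0 := by intro h; rw [h] at hp; linarith
  by_cases h : x = y
  · simp [h, Real.zero_rpow hp0]
  · have : dist x y = 1 := by
      rcases Xb_cases x with hx|hx <;> rcases Xb_cases y with hy|hy <;>
        simp_all [dist_z1_z0, dist_z0_z1]
    simp [h, this]

lemma Wp_le (hp : 1 ≤ p) (μ ν : Measure Xb) [IsProbabilityMeasure μ] [IsProbabilityMeasure ν]
    (hba : ν {z1} ≤ μ {z1}) :
    Wp p μ ν ≤ (μ {z1} - ν {z1}) ^ (1 / p) := by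
  have hp0 : p ≠ 0 := by intro h; rw [h] at hp; linarith
  set a := μ {z1}; set b := ν {z1}
  set π : Measure (Xb × Xb) :=
    (a - b) • Measure.dirac (z1, z0) + (b • Measure.dirac (z1, z1)
      + μ {z0} • Measure.dirac (z0, z0)) with hπ
  have hc : IsCoupling μ ν π := by
    constructor
    · rw [hπ]
      rw [Measure.map_add _ _ measurable_fst, Measure.map_add _ _ measurable_fst,
        Measure.map_smul, Measure.map_smul, Measure.map_smul,
        Measure.map_dirac' measurable_fst, Measure.map_dirac' measurable_fst,
        Measure.map_dirac' measurable_fst]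
      simp only []
      rw [← add_assoc, ← add_smul, tsub_add_cancel_of_le hba]
      exact (measure_decomp μ).symm
    · rw [hπ]
      rw [Measure.map_add _ _ measurable_snd, Measure.map_add _ _ measurable_snd,
        Measure.map_smul, Measure.map_smul, Measure.map_smul,
        Measure.map_dirac' measurable_snd, Measure.map_dirac' measurable_snd,
        Measure.map_dirac' measurable_snd]
      simp only []
      have h1 : ν {z0} = 1 - b := by
        have := prob_sum ν
        exact ENNReal.eq_sub_of_add_eq (measure_ne_top ν _) (by rw [add_comm]; exact this)
      have h2 : (a - b) + μ {z0} = ν {z0} := by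
        rw [h1, ENNReal.sub_add_eq_add_sub hba (measure_ne_top ν _), ← prob_sum μ]
      calc (a - b) • Measure.dirac (z0 : Xb) + (b • Measure.dirac z1 + μ {z0} • Measure.dirac z0)
          = b • Measure.dirac z1 + ((a - b) + μ {z0}) • Measure.dirac z0 := by
            rw [add_smul]; abel
        _ = ν := by rw [h2]; exact (measure_decomp ν).symm
  have hcost : ∫⁻ z, ENNReal.ofReal (dist z.1 z.2 ^ p) ∂π = a - b := by
    rw [hπ, lintegral_add_measure, lintegral_add_measure, lintegral_smul_measure,
      lintegral_smul_measure, lintegral_smul_measure, lintegral_dirac, lintegral_dirac,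
      lintegral_dirac]
    simp [dist_z1_z0, Real.zero_rpow hp0, Real.one_rpow]
  have hinf : (⨅ (π' : Measure (Xb × Xb)) (_ : IsCoupling μ ν π'),
      ∫⁻ z, ENNReal.ofReal (dist z.1 z.2 ^ p) ∂π') ≤ a - b := by
    rw [← hcost]; exact iInf₂_le π hc
  exact ENNReal.rpow_le_rpow hinf (div_nonneg zero_le_one (le_trans zero_le_one hp))

lemma le_Wp (hp : 1 ≤ p) (μ ν : Measure Xb) [IsProbabilityMeasure μ] [IsProbabilityMeasure ν] :
    (μ {z1} - ν {z1}) ^ (1 / p) ≤ Wp p μ ν := by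
  apply ENNReal.rpow_le_rpow _ (div_nonneg zero_le_one (le_trans zero_le_one hp))
  apply le_iInf₂
  intro π hc
  rw [tsub_le_iff_right]
  have hfst : μ {z1} = π {x : Xb × Xb | x.1 = z1} := by
    rw [← hc.1, Measure.map_apply measurable_fst (measurableSet_singleton _)]
    rfl
  have hset : {x : Xb × Xb | x.1 = z1} = {(z1, z0), (z1, z1)} := by
    ext z
    simp only [Set.mem_setOf_eq, Set.mem_insert_iff, Set.mem_singleton_iff]
    constructor
    · intro h
      rcases Xb_cases z.2 with h2|h2
      · left; rw [Prod.ext_iff]; exact ⟨h, h2⟩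
      · right; rw [Prod.ext_iff]; exact ⟨h, h2⟩
    · rintro (h|h) <;> rw [h]
  have hsplit : π {x : Xb × Xb | x.1 = z1} = π {(z1, z0)} + π {(z1, z1)} := by
    rw [hset, Set.insert_eq, measure_union
      (by simp [Set.disjoint_singleton, Prod.ext_iff, z0_ne_z1]) (measurableSet_singleton _)]
  have h1 : π {((z1 : Xb), (z0 : Xb))} ≤ ∫⁻ z, ENNReal.ofReal (dist z.1 z.2 ^ p) ∂π := by
    calc π {((z1 : Xb), (z0 : Xb))}
        = ∫⁻ z in {((z1 : Xb), (z0 : Xb))}, ENNReal.ofReal (dist z.1 z.2 ^ p) ∂π := by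
          rw [lintegral_singleton]
          simp [dist_z1_z0, Real.one_rpow]
      _ ≤ _ := setLIntegral_le_lintegral _ _
  have h2 : π {((z1 : Xb), (z1 : Xb))} ≤ ν {z1} := by
    rw [← hc.2, Measure.map_apply measurable_snd (measurableSet_singleton _)]
    apply measure_mono
    intro z hz
    simp only [Set.mem_singleton_iff] at hz
    simp [hz, Set.mem_preimage]
  calc μ {z1} = π {(z1, z0)} + π {(z1, z1)} := by rw [hfst, hsplit]
    _ ≤ _ := add_le_add h1 h2

end

lemma sep_finset (S : Finset ℝ) (hS : S.Nonempty) (ε : ℝ) (hε : 0 ≤ ε)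
    (hsep : ∀ a ∈ S, ∀ b ∈ S, a ≠ b → ε ≤ |a - b|) :
    ((S.card : ℝ) - 1) * ε ≤ S.max' hS - S.min' hS := by
  set n := S.card with hn
  have hn1 : 1 ≤ n := Finset.Nonempty.card_pos hS
  set e := S.orderIsoOfFin hn.symm with he
  set f : ℕ → ℝ := fun i => if h : i < n then (e ⟨i, h⟩ : ℝ) else 0 with hf
  have hmem : ∀ i (h : i < n), f i ∈ S := by
    intro i h; simp only [hf, dif_pos h]; exact (e ⟨i, h⟩).2
  have hstep : ∀ i ∈ Finset.range (n - 1), ε ≤ f (i + 1) - f i := by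
    intro i hi
    simp only [Finset.mem_range] at hi
    have h1 : i + 1 < n := by omega
    have h0 : i < n := by omega
    have hlt : f i < f (i + 1) := by
      simp only [hf, dif_pos h0, dif_pos h1]
      exact_mod_cast e.strictMono (by simp [Fin.lt_def])
    have := hsep _ (hmem _ h0) _ (hmem _ h1) (ne_of_lt hlt)
    rwa [abs_sub_comm, abs_of_pos (by linarith)] at this
  have htel : ∑ i ∈ Finset.range (n - 1), (f (i + 1) - f i) = f (n - 1) - f 0 :=
    Finset.sum_range_sub f (n - 1)
  have hsum : ((n : ℝ) - 1) * ε ≤ f (n - 1) - f 0 := by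
    rw [← htel]
    calc ((n : ℝ) - 1) * ε = (Finset.range (n-1)).card • ε := by
          rw [Finset.card_range, nsmul_eq_mul, Nat.cast_sub hn1]; norm_num
      _ ≤ _ := Finset.card_nsmul_le_sum _ _ _ hstep
  have h1 : f (n - 1) ≤ S.max' hS := S.le_max' _ (hmem _ (by omega))
  have h2 : S.min' hS ≤ f 0 := S.min'_le _ (hmem _ (by omega))
  linarith

/-- optimality of embedding constants for `X = {0,1}` with the two
points at distance `1`: any bi-Lipschitz map `g : X^k → W_p(X)` with constants
`m ≤ M` satisfies `m ≤ (2^k-1)^{-1/p}` and `M/m ≥ ((2^k-1)/k)^{1/p}`. -/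
theorem stmt8 (p : ℝ) (hp : 1 ≤ p) (k : ℕ) (hk : 0 < k)
    (g : (Fin k → ({0, 1} : Set ℝ)) → Measure ({0, 1} : Set ℝ))
    (hgprob : ∀ x, IsProbabilityMeasure (g x))
    (m M : ℝ) (hm : 0 < m) (hM : 0 < M)
    (hlow : ∀ x y, ENNReal.ofReal (m * (∑ i : Fin k, dist (x i) (y i) ^ p) ^ (1 / p)) ≤
      Wp p (g x) (g y))
    (hup : ∀ x y, Wp p (g x) (g y) ≤
      ENNReal.ofReal (M * (∑ i : Fin k, dist (x i) (y i) ^ p) ^ (1 / p))) :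
    m ≤ ((2:ℝ) ^ k - 1) ^ (-(1 / p)) ∧
      (((2:ℝ) ^ k - 1) / (k:ℝ)) ^ (1 / p) ≤ M / m := by
  haveI : ∀ x, IsProbabilityMeasure (g x) := hgprob
  have hp0 : p ≠ 0 := by intro h; rw [h] at hp; linarith
  have hppos : (0:ℝ) < p := by linarith
  have hip : (0:ℝ) ≤ 1 / p := by positivity
  set t : (Fin k → Xb) → ℝ := fun x => (g x {z1}).toReal with ht
  have hterm : ∀ x y : Xb, dist x y ^ p = if x = y then 0 else 1 := by
    intro x y
    by_cases h : x = y
    · simp [h, Real.zero_rpow hp0]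
    · have h1 : dist x y = 1 := by
        rcases Xb_cases x with hx|hx <;> rcases Xb_cases y with hy|hy <;>
          simp_all [dist_z1_z0, dist_z0_z1]
      simp [h, h1]
  have hD0 : ∀ x y : Fin k → Xb, 0 ≤ ∑ i, dist (x i) (y i) ^ p :=
    fun x y => Finset.sum_nonneg fun i _ => by rw [hterm]; split <;> norm_num
  have hD1 : ∀ x y : Fin k → Xb, x ≠ y → 1 ≤ ∑ i, dist (x i) (y i) ^ p := by
    intro x y hxy
    obtain ⟨i, hi⟩ : ∃ i, x i ≠ y i := by
      by_contra h; push_neg at h; exact hxy (funext h)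
    calc (1:ℝ) = dist (x i) (y i) ^ p := by simp [hterm, hi]
      _ ≤ _ := Finset.single_le_sum (f := fun j => dist (x j) (y j) ^ p)
        (fun j _ => by show (0:ℝ) ≤ dist (x j) (y j) ^ p; rw [hterm]; split <;> norm_num)
        (Finset.mem_univ i)
  have hDk : ∀ x y : Fin k → Xb, (∑ i, dist (x i) (y i) ^ p) ≤ (k:ℝ) := by
    intro x y
    calc (∑ i, dist (x i) (y i) ^ p) ≤ ∑ _i : Fin k, (1:ℝ) :=
        Finset.sum_le_sum fun i _ => by rw [hterm]; split <;> norm_num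
      _ = (k:ℝ) := by simp
  have ht0 : ∀ x, 0 ≤ t x := fun x => ENNReal.toReal_nonneg
  have ht1 : ∀ x, t x ≤ 1 := by
    intro x
    have h := ENNReal.toReal_mono (by simp) (prob_le_one (μ := g x) (s := {z1}))
    simpa using h
  have hDid : ∀ D : ℝ, 0 ≤ D → (D ^ (1/p)) ^ p = D := by
    intro D hD
    rw [← Real.rpow_mul hD, one_div_mul_cancel hp0, Real.rpow_one]
  have hofr : ∀ x y : Fin k → Xb, g y {z1} ≤ g x {z1} →
      g x {z1} - g y {z1} = ENNReal.ofReal (t x - t y) := by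
    intro x y hba
    rw [ENNReal.ofReal_sub _ (ht0 y), ht]
    simp only []
    rw [ENNReal.ofReal_toReal (measure_ne_top _ _), ENNReal.ofReal_toReal (measure_ne_top _ _)]
  have aux1 : ∀ x y, g y {z1} ≤ g x {z1} → x ≠ y → m ^ p ≤ t x - t y := by
    intro x y hba hxy
    have htt : 0 ≤ t x - t y := sub_nonneg.2 (ENNReal.toReal_mono (measure_ne_top _ _) hba)
    have h2 := (hlow x y).trans (Wp_le p hp (g x) (g y) hba)
    rw [hofr x y hba, ENNReal.ofReal_rpow_of_nonneg htt hip] at h2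
    have h3 : m * (∑ i, dist (x i) (y i) ^ p) ^ (1/p) ≤ (t x - t y) ^ (1/p) :=
      (ENNReal.ofReal_le_ofReal_iff (by positivity)).1 h2
    have h4 := Real.rpow_le_rpow (by positivity) h3 hppos.le
    rw [Real.mul_rpow hm.le (Real.rpow_nonneg (hD0 x y) _), hDid _ (hD0 x y),
      hDid _ htt] at h4
    have h5 : m ^ p * 1 ≤ m ^ p * (∑ i, dist (x i) (y i) ^ p) :=
      mul_le_mul_of_nonneg_left (hD1 x y hxy) (Real.rpow_nonneg hm.le p)
    calc m ^ p = m ^ p * 1 := (mul_one _).symm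
      _ ≤ m ^ p * (∑ i, dist (x i) (y i) ^ p) := h5
      _ ≤ t x - t y := h4
  have aux2 : ∀ x y, g y {z1} ≤ g x {z1} → t x - t y ≤ M ^ p * k := by
    intro x y hba
    have htt : 0 ≤ t x - t y := sub_nonneg.2 (ENNReal.toReal_mono (measure_ne_top _ _) hba)
    have h2 := (le_Wp p hp (g x) (g y)).trans (hup x y)
    rw [hofr x y hba, ENNReal.ofReal_rpow_of_nonneg htt hip] at h2
    have h3 : (t x - t y) ^ (1/p) ≤ M * (∑ i, dist (x i) (y i) ^ p) ^ (1/p) :=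
      (ENNReal.ofReal_le_ofReal_iff (by positivity)).1 h2
    have h4 := Real.rpow_le_rpow (Real.rpow_nonneg htt _) h3 hppos.le
    rw [Real.mul_rpow hM.le (Real.rpow_nonneg (hD0 x y) _), hDid _ (hD0 x y),
      hDid _ htt] at h4
    calc t x - t y ≤ M ^ p * (∑ i, dist (x i) (y i) ^ p) := h4
      _ ≤ M ^ p * k := mul_le_mul_of_nonneg_left (hDk x y) (Real.rpow_nonneg hM.le p)
  have step1 : ∀ x y, x ≠ y → m ^ p ≤ |t x - t y| := by
    intro x y hxy
    rcases le_total (g y {z1}) (g x {z1}) with hba | hba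
    · have h := aux1 x y hba hxy
      rw [abs_of_nonneg (by linarith [Real.rpow_pos_of_pos hm p])]
      exact h
    · have h := aux1 y x hba (Ne.symm hxy)
      rw [abs_sub_comm, abs_of_nonneg (by linarith [Real.rpow_pos_of_pos hm p])]
      exact h
  have step2 : ∀ x y, |t x - t y| ≤ M ^ p * k := by
    intro x y
    rcases le_total (g y {z1}) (g x {z1}) with hba | hba
    · have h := aux2 x y hba
      have htt : 0 ≤ t x - t y := sub_nonneg.2 (ENNReal.toReal_mono (measure_ne_top _ _) hba)
      rwa [abs_of_nonneg htt]
    · have h := aux2 y x hba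
      have htt : 0 ≤ t y - t x := sub_nonneg.2 (ENNReal.toReal_mono (measure_ne_top _ _) hba)
      rwa [abs_sub_comm, abs_of_nonneg htt]
  have tinj : Function.Injective t := by
    intro x y hxy
    by_contra h
    have h1 := step1 x y h
    rw [hxy] at h1
    simp only [sub_self, abs_zero] at h1
    exact absurd h1 (not_le.2 (Real.rpow_pos_of_pos hm p))
  set S : Finset ℝ := Finset.image t Finset.univ with hSdef
  have hScard : S.card = 2 ^ k := by
    rw [hSdef, Finset.card_image_of_injective _ tinj, Finset.card_univ]
    simp [Fintype.card_fun]
  have hS : S.Nonempty := ⟨t (fun _ => z0), Finset.mem_image_of_mem _ (Finset.mem_univ _)⟩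
  have hsep : ∀ a ∈ S, ∀ b ∈ S, a ≠ b → m ^ p ≤ |a - b| := by
    intro a ha b hb hab
    obtain ⟨x, _, hx⟩ := Finset.mem_image.1 ha
    obtain ⟨y, _, hy⟩ := Finset.mem_image.1 hb
    subst hx; subst hy
    exact step1 x y (fun h => hab (by rw [h]))
  have hmain := sep_finset S hS (m ^ p) (Real.rpow_nonneg hm.le p) hsep
  rw [hScard] at hmain
  push_cast at hmain
  obtain ⟨xmax, _, hxmax⟩ := Finset.mem_image.1 (S.max'_mem hS)
  obtain ⟨xmin, _, hxmin⟩ := Finset.mem_image.1 (S.min'_mem hS)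
  have hA : ((2:ℝ) ^ k - 1) * m ^ p ≤ 1 := by
    have : S.max' hS - S.min' hS ≤ 1 := by
      rw [← hxmax, ← hxmin]
      linarith [ht1 xmax, ht0 xmin]
    linarith
  have hB : ((2:ℝ) ^ k - 1) * m ^ p ≤ M ^ p * k := by
    have h2 : S.max' hS - S.min' hS ≤ M ^ p * k := by
      rw [← hxmax, ← hxmin]
      exact le_trans (le_abs_self _) (step2 xmax xmin)
    linarith
  have h2k : (0:ℝ) < 2 ^ k - 1 := by
    have : (2:ℝ) ^ 1 ≤ 2 ^ k := pow_le_pow_right₀ (by norm_num) hk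
    simp at this; linarith
  have hkpos : (0:ℝ) < k := by exact_mod_cast hk
  constructor
  · have hmp : m ^ p ≤ ((2:ℝ) ^ k - 1)⁻¹ := by
      rw [← one_div, le_div_iff₀ h2k]
      linarith [hA, mul_comm (m ^ p) ((2:ℝ) ^ k - 1)]
    have := Real.rpow_le_rpow (Real.rpow_nonneg hm.le p) hmp hip
    rwa [← Real.rpow_mul hm.le, mul_one_div_cancel hp0, Real.rpow_one,
      Real.inv_rpow (le_of_lt h2k), ← Real.rpow_neg (le_of_lt h2k)] at this
  · have hdiv : ((2:ℝ) ^ k - 1) / k ≤ (M / m) ^ p := by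
      rw [Real.div_rpow hM.le hm.le, div_le_div_iff₀ hkpos (Real.rpow_pos_of_pos hm p)]
      linarith [hB]
    have := Real.rpow_le_rpow (by positivity) hdiv hip
    rwa [← Real.rpow_mul (by positivity), mul_one_div_cancel hp0, Real.rpow_one] at this
end

section
/- Let X = {0,1}^ℕ with the ultrametric d(x,y) = 2^{−i} where i is the least index with x^i ≠ y^i. Fix k, let ℓ be the least integer with 2^ℓ ≥ k, and let w_1,…,w_k be distinct words in {0,1}^ℓ. Define g : X^k → W_p(X) by g(x_1,…,x_k) = Σ_i (1/k)·δ_{w_i x_i}, where w x denotes prepending w to x. Then g is a homothetic embedding: W_p(g(x̄), g(ȳ)) = (1/(k^{1/p}·2^ℓ))·d_p(x̄, ȳ). -/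
open MeasureTheory ENNReal

/-- The space `{0,1}^ℕ` with the ultrametric `d(x,y) = (1/2)^i`, where `i` is the
first index at which `x` and `y` differ. -/
noncomputable local instance : MetricSpace (ℕ → Bool) :=
  PiNat.metricSpace (E := fun _ => Bool)

noncomputable local instance : MeasurableSpace (ℕ → Bool) := borel _

/-- Prepending a word `w ∈ {0,1}^ℓ` to a sequence `x ∈ {0,1}^ℕ`. -/
def prepend {ℓ : ℕ} (w : Fin ℓ → Bool) (x : ℕ → Bool) : ℕ → Bool := fun n =>
  if h : n < ℓ then w ⟨n, h⟩ else x (n - ℓ)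

/-!
For the ultrametric, a common prefix `w` of length `ℓ` scales distances by `2^{-ℓ}`, while
prefixes `w_i ≠ w_j` put `w_i x` and `w_j y` at distance at least `2^{-ℓ}` from each other. Hence
each atom `w_i x_i` of `g x̄` is at least as close to `w_i y_i` as to any other atom of `g ȳ`.
For two measures with the same weights on finitely many atoms and this property, the diagonal
coupling is optimal: every coupling `π` is supported on `X × {w_j y_j}`, where the cost
`c(u, v)` dominates `F u := min_j c(u, w_j y_j)`, and `∫ F ∘ fst dπ = ∫ F d(g x̄)` is the diagonal cost.
-/

instance : BorelSpace (ℕ → Bool) := ⟨rfl⟩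

section FiniteCoupling

variable {X ι : Type*} [MeasurableSpace X] [Fintype ι]

theorem lintegral_sum_smul_dirac (m : ι → ℝ≥0∞) (a : ι → X) {f : X → ℝ≥0∞}
    (hf : Measurable f) :
    ∫⁻ u, f u ∂(∑ i, m i • Measure.dirac (a i)) = ∑ i, m i * f (a i) := by
  simp only [lintegral_finsetSum_measure, lintegral_smul_measure, lintegral_dirac' _ hf,
    smul_eq_mul]

theorem map_sum_smul_dirac {Y : Type*} [MeasurableSpace Y] (m : ι → ℝ≥0∞) (a : ι → X)
    {f : X → Y} (hf : Measurable f) :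
    (∑ i, m i • Measure.dirac (a i)).map f = ∑ i, m i • Measure.dirac (f (a i)) := by
  simp only [Measure.map_finset_sum' hf.aemeasurable, Measure.map_smul, Measure.map_dirac' hf]

theorem isCoupling_sum_smul_dirac (m : ι → ℝ≥0∞) (a b : ι → X) :
    IsCoupling (∑ i, m i • Measure.dirac (a i)) (∑ i, m i • Measure.dirac (b i))
      (∑ i, m i • Measure.dirac (a i, b i)) :=
  ⟨map_sum_smul_dirac m _ measurable_fst, map_sum_smul_dirac m _ measurable_snd⟩

theorem ae_mem_range_sum_smul_dirac [MeasurableSingletonClass X] (m : ι → ℝ≥0∞) (b : ι → X) :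
    ∀ᵐ u ∂(∑ i, m i • Measure.dirac (b i)), u ∈ Set.range b := by
  rw [ae_iff]
  simp

theorem iInf_isCoupling_lintegral_sum_smul_dirac [MeasurableSingletonClass X]
    (m : ι → ℝ≥0∞) (a b : ι → X) {c : X × X → ℝ≥0∞} (hc : Measurable c)
    (hopt : ∀ i j, c (a i, b i) ≤ c (a i, b j)) :
    ⨅ (π : Measure (X × X)) (_ : IsCoupling (∑ i, m i • Measure.dirac (a i))
        (∑ i, m i • Measure.dirac (b i)) π), ∫⁻ z, c z ∂π = ∑ i, m i * c (a i, b i) := by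
  refine le_antisymm ?_ (le_iInf₂ fun π hπ => ?_)
  · refine (iInf₂_le _ (isCoupling_sum_smul_dirac m a b)).trans_eq ?_
    exact lintegral_sum_smul_dirac m _ hc
  · set F : X → ℝ≥0∞ := fun u => ⨅ j, c (u, b j)
    have hF : Measurable F :=
      Measurable.iInf fun j => hc.comp (measurable_id.prodMk measurable_const)
    have hFa : ∀ i, F (a i) = c (a i, b i) := fun i =>
      le_antisymm (iInf_le _ i) (le_iInf (hopt i))
    have hsupp : ∀ᵐ z ∂π, z.2 ∈ Set.range b := by
      have := ae_mem_range_sum_smul_dirac m b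
      rw [← hπ.2] at this
      exact ae_of_ae_map measurable_snd.aemeasurable this
    calc ∑ i, m i * c (a i, b i) = ∫⁻ u, F u ∂(∑ i, m i • Measure.dirac (a i)) := by
          simp only [lintegral_sum_smul_dirac m a hF, hFa]
      _ = ∫⁻ z, F z.1 ∂π := by rw [← hπ.1, lintegral_map hF measurable_fst]
      _ ≤ ∫⁻ z, c z ∂π := lintegral_mono_ae <| hsupp.mono fun z ⟨j, hj⟩ =>
          (iInf_le _ j).trans_eq (by rw [hj])

end FiniteCoupling

theorem rpow_sum_inv_mul_ofReal_div_rpow {ι : Type*} [Fintype ι] {p : ℝ} (hp : 0 < p) {n : ℕ}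
    (hn : 0 < n) {c : ℝ} (hc : 0 ≤ c) (d : ι → ℝ) (hd : ∀ i, 0 ≤ d i) :
    (∑ i, (n : ℝ≥0∞)⁻¹ * ENNReal.ofReal ((d i / c) ^ p)) ^ (1 / p) =
      ENNReal.ofReal (1 / ((n : ℝ) ^ (1 / p) * c) * (∑ i, d i ^ p) ^ (1 / p)) := by
  have hn' : (0 : ℝ) < n := Nat.cast_pos.mpr hn
  have hsum : ∑ i, (n : ℝ≥0∞)⁻¹ * ENNReal.ofReal ((d i / c) ^ p) =
      ENNReal.ofReal ((n * c ^ p)⁻¹ * ∑ i, d i ^ p) := by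
    rw [← ENNReal.ofReal_natCast, ← ENNReal.ofReal_inv_of_pos hn', Finset.mul_sum,
      ENNReal.ofReal_sum_of_nonneg fun i _ =>
        mul_nonneg (by positivity) (Real.rpow_nonneg (hd i) p)]
    refine Finset.sum_congr rfl fun i _ => ?_
    rw [← ENNReal.ofReal_mul (inv_nonneg.mpr hn'.le), Real.div_rpow (hd i) hc, mul_inv]
    ring_nf
  have hd' : 0 ≤ ∑ i, d i ^ p := Finset.sum_nonneg fun i _ => Real.rpow_nonneg (hd i) p
  rw [hsum, ENNReal.ofReal_rpow_of_nonneg (by positivity) (by positivity),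
    Real.mul_rpow (by positivity) hd', Real.inv_rpow (by positivity),
    Real.mul_rpow hn'.le (by positivity), one_div p, Real.rpow_rpow_inv hc hp.ne', one_div]

theorem PiNat.firstDiff_eq {E : ℕ → Type*} {x y : ∀ n, E n} {m : ℕ}
    (heq : ∀ n < m, x n = y n) (hne : x m ≠ y m) : PiNat.firstDiff x y = m := by
  have hxy : x ≠ y := fun h => hne (congrFun h m)
  refine le_antisymm (not_lt.mp fun hlt => hne (PiNat.apply_eq_of_lt_firstDiff hlt))
    (not_lt.mp fun hlt => PiNat.apply_firstDiff_ne hxy (heq _ hlt))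

section Prepend

variable {ℓ : ℕ}

theorem prepend_injective (w : Fin ℓ → Bool) : Function.Injective (prepend w) := fun x y h =>
  funext fun n => by simpa [prepend] using congrFun h (ℓ + n)

theorem firstDiff_prepend (w : Fin ℓ → Bool) {x y : ℕ → Bool} (hxy : x ≠ y) :
    PiNat.firstDiff (prepend w x) (prepend w y) = ℓ + PiNat.firstDiff x y := by
  refine PiNat.firstDiff_eq (fun n hn => ?_) ?_
  · by_cases hnℓ : n < ℓ
    · simp [prepend, hnℓ]
    · simp only [prepend, dif_neg hnℓ]
      exact PiNat.apply_eq_of_lt_firstDiff (by omega)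
  · simpa [prepend] using PiNat.apply_firstDiff_ne hxy

theorem dist_prepend_prepend (w : Fin ℓ → Bool) (x y : ℕ → Bool) :
    dist (prepend w x) (prepend w y) = dist x y / 2 ^ ℓ := by
  rcases eq_or_ne x y with rfl | hxy
  · simp
  rw [PiNat.dist_eq_of_ne hxy, PiNat.dist_eq_of_ne ((prepend_injective w).ne hxy),
    firstDiff_prepend w hxy, pow_add, one_div_pow]
  ring

theorem le_dist_prepend_of_ne {v w : Fin ℓ → Bool} (hvw : v ≠ w) (x y : ℕ → Bool) :
    (1 / 2 : ℝ) ^ ℓ ≤ dist (prepend v x) (prepend w y) := by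
  by_contra! h
  exact hvw <| funext fun m => by simpa [prepend] using PiNat.apply_eq_of_dist_lt h m.2.le

theorem dist_prepend_le_of_injective {k : ℕ} {w : Fin k → Fin ℓ → Bool}
    (hw : Function.Injective w) (x y : Fin k → ℕ → Bool) (i j : Fin k) :
    dist (prepend (w i) (x i)) (prepend (w i) (y i)) ≤
      dist (prepend (w i) (x i)) (prepend (w j) (y j)) := by
  rcases eq_or_ne i j with rfl | hij
  · rfl
  calc dist (prepend (w i) (x i)) (prepend (w i) (y i)) = dist (x i) (y i) / 2 ^ ℓ :=
        dist_prepend_prepend _ _ _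
    _ ≤ 1 / 2 ^ ℓ := by gcongr; exact PiNat.dist_le_one _ _
    _ = (1 / 2 : ℝ) ^ ℓ := (one_div_pow 2 ℓ).symm
    _ ≤ _ := le_dist_prepend_of_ne (hw.ne hij) _ _

end Prepend

theorem stmt10_general (p : ℝ) (hp : 1 ≤ p) (k ℓ : ℕ) (hk : 0 < k)
    (w : Fin k → (Fin ℓ → Bool)) (hw : Function.Injective w)
    (g : (Fin k → (ℕ → Bool)) → Measure (ℕ → Bool))
    (hg : ∀ x, g x = ∑ i : Fin k, ((k : ℝ≥0∞))⁻¹ • Measure.dirac (prepend (w i) (x i)))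
    (x y : Fin k → (ℕ → Bool)) :
    Wp p (g x) (g y) =
      ENNReal.ofReal
        ((1 / ((k:ℝ) ^ (1 / p) * (2:ℝ) ^ ℓ)) *
          (∑ i : Fin k, dist (x i) (y i) ^ p) ^ (1 / p)) := by
  have hp0 : 0 < p := one_pos.trans_le hp
  have hcost : Measurable fun z : (ℕ → Bool) × (ℕ → Bool) => ENNReal.ofReal (dist z.1 z.2 ^ p) :=
    (measurable_dist.pow_const p).ennreal_ofReal
  have hopt : ∀ i j, ENNReal.ofReal (dist (prepend (w i) (x i)) (prepend (w i) (y i)) ^ p) ≤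
      ENNReal.ofReal (dist (prepend (w i) (x i)) (prepend (w j) (y j)) ^ p) := fun i j =>
    ENNReal.ofReal_le_ofReal <|
      Real.rpow_le_rpow dist_nonneg (dist_prepend_le_of_injective hw x y i j) hp0.le
  rw [Wp, hg, hg, iInf_isCoupling_lintegral_sum_smul_dirac _ (fun i => prepend (w i) (x i))
    (fun i => prepend (w i) (y i)) hcost hopt]
  simp only [dist_prepend_prepend]
  exact rpow_sum_inv_mul_ofReal_div_rpow hp0 hk (by positivity) _ fun _ => dist_nonneg

/-- for `X = {0,1}^ℕ` with the ultrametric, prefixing by `k`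
distinct words of length `ℓ` (where `ℓ` is the least integer with `2^ℓ ≥ k`)
yields a homothetic embedding `g : X^k → W_p(X)` with
`W_p(g x̄, g ȳ) = (1/(k^{1/p}·2^ℓ))·d_p(x̄, ȳ)`. -/
theorem stmt10 (p : ℝ) (hp : 1 ≤ p) (k ℓ : ℕ) (hk : 0 < k)
    (hℓ : k ≤ 2 ^ ℓ) (hmin : ∀ j : ℕ, k ≤ 2 ^ j → ℓ ≤ j)
    (w : Fin k → (Fin ℓ → Bool)) (hw : Function.Injective w)
    (g : (Fin k → (ℕ → Bool)) → Measure (ℕ → Bool))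
    (hg : ∀ x, g x = ∑ i : Fin k, ((k : ℝ≥0∞))⁻¹ • Measure.dirac (prepend (w i) (x i)))
    (x y : Fin k → (ℕ → Bool)) :
    Wp p (g x) (g y) =
      ENNReal.ofReal
        ((1 / ((k:ℝ) ^ (1 / p) * (2:ℝ) ^ ℓ)) *
          (∑ i : Fin k, dist (x i) (y i) ^ p) ^ (1 / p)) :=
  stmt10_general p hp k ℓ hk w hw g hg x y
end

section
/- Let (c_n) be a sequence of positive real numbers with Σ c_n^d < ∞. Then there exist a constant K > 0 (depending only on d and Σ c_n^d) and a family of homotheties h_n : I^d → I^d with pairwise disjoint images and ratio K·c_n; equivalently, the unit cube I^d contains a family of pairwise disjoint axis-parallel subcubes of side lengths K·c_n. -/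
/-!
After rescaling we may assume `∑ aₙ^d ≤ 8^(-d)`. Sort the cubes into dyadic classes: class `m`
holds the finitely many cubes with `2^(-(m+3)) ≤ aₙ < 2^(-(m+2)) = σₘ`. Class `m` is put on the
grid of mesh `σₘ` in a slab `[Xₘ, Xₘ + Wₘ) × [0,1]^(d-1)`, made of `Qₘ` layers of `2^((m+2)(d-1))`
cells each, one cube per cell. Taking `Qₘ` one more than needed wastes at most `σₘ` of width, so
`∑ Wₘ ≤ 2^d ∑ aₙ^d + ∑ σₘ ≤ 1/4 + 1/2`, and the slabs stack inside the unit cube along the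
first axis.
-/

open Set Finset
open scoped Function

section Cubes

variable {ι : Type*}

def cube (z : ι → ℝ) (a : ℝ) : Set (ι → ℝ) :=
  Icc z (z + Function.const ι a)

def halfOpenBox (x w : ι → ℝ) : Set (ι → ℝ) :=
  univ.pi fun i => Ico (x i) (x i + w i)

theorem cube_eq_pi (z : ι → ℝ) (a : ℝ) : cube z a = univ.pi fun i => Icc (z i) (z i + a) :=
  (pi_univ_Icc _ _).symm

theorem disjoint_cube_of_disjoint_Icc {z z' : ι → ℝ} {a a' : ℝ} (i : ι)
    (h : Disjoint (Icc (z i) (z i + a)) (Icc (z' i) (z' i + a'))) :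
    Disjoint (cube z a) (cube z' a') := by
  rw [cube_eq_pi, cube_eq_pi]
  exact disjoint_univ_pi.2 ⟨i, h⟩

theorem halfOpenBox_subset_Icc (x w : ι → ℝ) : halfOpenBox x w ⊆ Icc x (x + w) := by
  rw [← pi_univ_Icc]
  exact pi_mono fun i _ => Ico_subset_Icc_self

theorem disjoint_halfOpenBox_of_le {x w y v : ι → ℝ} (i : ι) (h : x i + w i ≤ y i) :
    Disjoint (halfOpenBox x w) (halfOpenBox y v) :=
  disjoint_univ_pi.2 ⟨i, Ico_disjoint_Ico.2 <| by grind⟩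

end Cubes

theorem disjoint_Icc_add_nat_mul {x s a a' : ℝ} {p q : ℕ} (hs : 0 ≤ s) (ha : a < s)
    (ha' : a' < s) (hpq : p ≠ q) :
    Disjoint (Icc (x + p * s) (x + p * s + a)) (Icc (x + q * s) (x + q * s + a')) := by
  wlog hlt : p < q generalizing p q a a'
  · exact (this ha' ha hpq.symm (lt_of_le_of_ne (not_lt.1 hlt) hpq.symm)).symm
  have hpq : (p : ℝ) + 1 ≤ q := by exact_mod_cast hlt
  rw [Set.disjoint_left]
  rintro y ⟨-, hy⟩ ⟨hy', -⟩
  nlinarith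

theorem Set.Finite.exists_injOn_of_ncard_le_prod {α ι : Type*} [Fintype ι] {T : Set α}
    (hT : T.Finite) {B : ι → ℕ} (hcard : T.ncard ≤ ∏ i, B i) :
    ∃ f : α → ι → ℕ, (∀ n ∈ T, ∀ i, f n i < B i) ∧ InjOn f T := by
  classical
  have hgrid : {p : ι → ℕ | ∀ i, p i < B i} =
      ↑(Fintype.piFinset fun i => Finset.range (B i) : Finset (ι → ℕ)) := by
    ext p; simp
  obtain ⟨f, hf_maps, hf_inj⟩ := hT.exists_injOn_of_encard_le
    (t := {p : ι → ℕ | ∀ i, p i < B i}) <| by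
      rw [hgrid, encard_coe_eq_coe_finsetCard, Fintype.card_piFinset, ← hT.cast_ncard_eq]
      simpa using (Nat.cast_le (α := ℕ∞)).2 hcard
  exact ⟨f, fun n hn => hf_maps hn, hf_inj⟩

theorem exists_pairwiseDisjoint_cube_subset_halfOpenBox {α ι : Type*} [Fintype ι] {T : Set α}
    (hT : T.Finite) {B : ι → ℕ} (hcard : T.ncard ≤ ∏ i, B i) {s : ℝ} (hs : 0 ≤ s)
    {a : α → ℝ} (ha : ∀ n ∈ T, a n < s) (x : ι → ℝ) :
    ∃ z : α → ι → ℝ, (∀ n ∈ T, cube (z n) (a n) ⊆ halfOpenBox x fun i => B i * s) ∧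
      T.PairwiseDisjoint fun n => cube (z n) (a n) := by
  obtain ⟨f, hf_lt, hf_inj⟩ := hT.exists_injOn_of_ncard_le_prod hcard
  refine ⟨fun n i => x i + f n i * s, fun n hn y hy i _ => ?_, fun n hn n' hn' hne => ?_⟩
  · have hfB : (f n i : ℝ) + 1 ≤ B i := by exact_mod_cast hf_lt n hn i
    have hyi := (cube_eq_pi _ _ ▸ hy) i (mem_univ i)
    constructor <;> nlinarith [hyi.1, hyi.2, ha n hn]
  · obtain ⟨i, hi⟩ : ∃ i, f n i ≠ f n' i := by
      by_contra! h
      exact hne (hf_inj hn hn' (funext h))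
    exact disjoint_cube_of_disjoint_Icc i (disjoint_Icc_add_nat_mul hs (ha n hn) (ha n' hn') hi)

theorem exists_pow_add_succ_le_lt {r a : ℝ} (hr0 : 0 < r) (hr1 : r < 1) (ha : 0 < a) {k : ℕ}
    (hk : a < r ^ k) : ∃ m : ℕ, r ^ (m + k + 1) ≤ a ∧ a < r ^ (m + k) := by
  classical
  have hex : ∃ m : ℕ, r ^ (m + k + 1) ≤ a := by
    obtain ⟨m, hm⟩ := exists_pow_lt_of_lt_one ha hr1
    exact ⟨m, (pow_le_pow_of_le_one hr0.le hr1.le (by omega)).trans hm.le⟩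
  refine ⟨Nat.find hex, Nat.find_spec hex, ?_⟩
  rcases h : Nat.find hex with _ | m
  · simpa using hk
  · have := Nat.find_min hex (show m < Nat.find hex by omega)
    rw [not_le] at this
    rwa [show m + 1 + k = m + k + 1 by omega]

theorem sum_ncard_fiber_mul_le_tsum {α : Type*} {f : α → ℝ} (hf : Summable f)
    (hf0 : ∀ n, 0 ≤ f n) {cl : α → ℕ} (hfin : ∀ m, (cl ⁻¹' {m}).Finite) {ε : ℕ → ℝ}
    (hε : ∀ n, ε (cl n) ≤ f n) (s : Finset ℕ) :
    ∑ m ∈ s, ((cl ⁻¹' {m}).ncard : ℝ) * ε m ≤ ∑' n, f n := by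
  classical
  set F : ℕ → Finset α := fun m => (hfin m).toFinset
  have hF : (s : Set ℕ).PairwiseDisjoint F := fun m _ m' _ hne =>
    Finset.disjoint_left.2 fun n hn hn' => hne (by simp_all [F])
  calc ∑ m ∈ s, ((cl ⁻¹' {m}).ncard : ℝ) * ε m = ∑ m ∈ s, ∑ n ∈ F m, ε (cl n) := by
        refine sum_congr rfl fun m _ => ?_
        rw [ncard_eq_toFinset_card _ (hfin m), ← nsmul_eq_mul, ← sum_const]
        exact sum_congr rfl fun n hn => by simp_all [F]
    _ ≤ ∑ m ∈ s, ∑ n ∈ F m, f n := by gcongr with m _ n; exact hε n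
    _ = ∑ n ∈ s.biUnion F, f n := (sum_biUnion hF).symm
    _ ≤ ∑' n, f n := hf.sum_le_tsum _ fun n _ => hf0 n

theorem Summable.finite_setOf_le {α : Type*} {f : α → ℝ} (hf : Summable f) {ε : ℝ}
    (hε : 0 < ε) : {n | ε ≤ f n}.Finite := by
  simpa using Filter.eventually_cofinite.1 (hf.tendsto_cofinite_zero.eventually_lt_const hε)

theorem cast_div_pow_add_one_mul_le {N g d : ℕ} {σ : ℝ} (hσ : 0 ≤ σ) (hgσ : g * σ = 1) :
    ((N / g ^ d + 1 : ℕ) : ℝ) * σ ≤ N * σ ^ (d + 1) + σ := by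
  have hσd : (N : ℝ) / (g : ℝ) ^ d = N * σ ^ d := by
    rw [div_eq_mul_inv, ← inv_pow, inv_eq_of_mul_eq_one_right hgσ]
  calc ((N / g ^ d + 1 : ℕ) : ℝ) * σ ≤ ((N : ℝ) / (g : ℝ) ^ d + 1) * σ := by
        gcongr
        rw [Nat.cast_add_one, ← Nat.cast_pow]
        gcongr
        exact Nat.cast_div_le
    _ = N * σ ^ (d + 1) + σ := by rw [hσd]; ring

theorem exists_pairwise_disjoint_cube_subset_unitCube_of_slabs {α : Type*} {d : ℕ} {cl : α → ℕ}
    {a : α → ℝ} {σ : ℕ → ℝ} {g Q : ℕ → ℕ} (hfin : ∀ m, (cl ⁻¹' {m}).Finite)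
    (hcard : ∀ m, (cl ⁻¹' {m}).ncard ≤ Q m * g m ^ d) (hσ : ∀ m, 0 ≤ σ m)
    (ha : ∀ n, a n < σ (cl n)) (hg : ∀ m, g m * σ m ≤ 1)
    (hQ : ∀ M, ∑ m ∈ Finset.range M, Q m * σ m ≤ 1) :
    ∃ z : α → Fin (d + 1) → ℝ, (∀ n, cube (z n) (a n) ⊆ Icc 0 1) ∧
      Pairwise (Disjoint on fun n => cube (z n) (a n)) := by
  set X : ℕ → ℝ := fun m => ∑ k ∈ Finset.range m, Q k * σ k
  set B : ℕ → Fin (d + 1) → ℕ := fun m => Fin.cons (Q m) fun _ => g m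
  set slab : ℕ → Set (Fin (d + 1) → ℝ) := fun m =>
    halfOpenBox (Pi.single 0 (X m)) fun i => B m i * σ m
  have hX_sep : ∀ m m', m < m' → X m + Q m * σ m ≤ X m' := fun m m' h => by
    rw [← sum_range_succ]
    exact sum_le_sum_of_subset_of_nonneg (range_subset_range.2 h) fun k _ _ => by
      have := hσ k; positivity
  have hslab_sub : ∀ m, slab m ⊆ Icc 0 1 := by
    refine fun m => (halfOpenBox_subset_Icc _ _).trans (Icc_subset_Icc (fun i => ?_) (fun i => ?_))
    · refine Fin.cases ?_ (fun j => ?_) i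
      · simpa [X] using sum_nonneg fun k _ => mul_nonneg (Nat.cast_nonneg (Q k)) (hσ k)
      · simp
    · refine Fin.cases ?_ (fun j => ?_) i
      · simpa [B, X, ← sum_range_succ] using hQ (m + 1)
      · simpa [B] using hg m
  have hslab_disj : Pairwise (Disjoint on slab) := by
    intro m m' hne
    rcases hne.lt_or_gt with h | h
    · exact disjoint_halfOpenBox_of_le 0 (by simpa [B] using hX_sep m m' h)
    · exact (disjoint_halfOpenBox_of_le 0 (by simpa [B] using hX_sep m' m h)).symm
  have hplace : ∀ m, ∃ z : α → Fin (d + 1) → ℝ,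
      (∀ n ∈ cl ⁻¹' {m}, cube (z n) (a n) ⊆ slab m) ∧
        (cl ⁻¹' {m}).PairwiseDisjoint fun n => cube (z n) (a n) := fun m =>
    exists_pairwiseDisjoint_cube_subset_halfOpenBox (hfin m)
      (by simpa [B, Fin.prod_cons] using hcard m) (hσ m) (fun n hn => hn ▸ ha n) _
  choose z hz_sub hz_disj using hplace
  refine ⟨fun n => z (cl n) n, fun n => (hz_sub _ n rfl).trans (hslab_sub _), fun n n' hne => ?_⟩
  by_cases h : cl n = cl n'
  · simp only [Function.onFun, ← h]
    exact hz_disj (cl n) rfl h.symm hne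
  · exact (hslab_disj h).mono (hz_sub _ n rfl) (hz_sub _ n' rfl)

theorem exists_pairwise_disjoint_cube_subset_unitCube {d : ℕ} {a : ℕ → ℝ} (ha : ∀ n, 0 < a n)
    (hs : Summable fun n => a n ^ (d + 1)) (hsum : ∑' n, a n ^ (d + 1) ≤ (1 / 8) ^ (d + 1)) :
    ∃ z : ℕ → Fin (d + 1) → ℝ, (∀ n, cube (z n) (a n) ⊆ Icc 0 1) ∧
      Pairwise (Disjoint on fun n => cube (z n) (a n)) := by
  have ha_lt : ∀ n, a n < (1 / 2) ^ 2 := fun n => by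
    have := (hs.le_tsum n fun j _ => by have := ha j; positivity).trans hsum
    have := (pow_le_pow_iff_left₀ (ha n).le (by norm_num) d.succ_ne_zero).1 this
    linarith
  choose cl hcl_le hcl_lt using fun n =>
    exists_pow_add_succ_le_lt (by norm_num : (0 : ℝ) < 1 / 2) (by norm_num) (ha n) (ha_lt n)
  set σ : ℕ → ℝ := fun m => (1 / 2) ^ (m + 2)
  set g : ℕ → ℕ := fun m => 2 ^ (m + 2)
  have hgσ : ∀ m, (g m : ℝ) * σ m = 1 := fun m => by simp [g, σ]
  have hσ_le : ∀ n, σ (cl n) ≤ 2 * a n := fun n => by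
    have := hcl_le n
    simp only [σ, pow_succ] at this ⊢
    linarith
  have hfin : ∀ m, (cl ⁻¹' {m}).Finite := fun m =>
    (hs.finite_setOf_le (by positivity : 0 < ((1 / 2 : ℝ) ^ (m + 2 + 1)) ^ (d + 1))).subset
      fun n (hn : cl n = m) => pow_le_pow_left₀ (by positivity) (hn ▸ hcl_le n) _
  set N : ℕ → ℕ := fun m => (cl ⁻¹' {m}).ncard
  have hvol : ∀ M, ∑ m ∈ Finset.range M, (N m : ℝ) * σ m ^ (d + 1) ≤ (1 / 4) ^ (d + 1) := by
    intro M
    calc ∑ m ∈ Finset.range M, (N m : ℝ) * σ m ^ (d + 1)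
        ≤ ∑' n, 2 ^ (d + 1) * a n ^ (d + 1) :=
          sum_ncard_fiber_mul_le_tsum (hs.mul_left _) (fun n => by have := ha n; positivity) hfin
            (fun n => by rw [← mul_pow]; exact pow_le_pow_left₀ (by positivity) (hσ_le n) _) _
      _ ≤ 2 ^ (d + 1) * (1 / 8) ^ (d + 1) := by rw [tsum_mul_left]; gcongr
      _ = (1 / 4) ^ (d + 1) := by rw [← mul_pow]; norm_num
  have hgeom : ∀ M, ∑ m ∈ Finset.range M, σ m ≤ 1 / 2 := fun M => by
    have := sum_geometric_two_le M
    simp only [σ, pow_add, ← sum_mul]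
    linarith
  refine exists_pairwise_disjoint_cube_subset_unitCube_of_slabs
    (Q := fun m => N m / g m ^ d + 1) hfin
    (fun m => by rw [mul_comm]; exact (Nat.lt_mul_div_succ _ (by positivity)).le)
    (fun m => by positivity) hcl_lt (fun m => (hgσ m).le) fun M => ?_
  calc ∑ m ∈ Finset.range M, ((N m / g m ^ d + 1 : ℕ) : ℝ) * σ m
      ≤ ∑ m ∈ Finset.range M, ((N m : ℝ) * σ m ^ (d + 1) + σ m) :=
        sum_le_sum fun m _ => cast_div_pow_add_one_mul_le (by positivity) (hgσ m)
    _ ≤ (1 / 4) ^ (d + 1) + 1 / 2 := by rw [sum_add_distrib]; exact add_le_add (hvol M) (hgeom M)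
    _ ≤ 1 := by
      have : ((1 : ℝ) / 4) ^ (d + 1) ≤ 1 / 4 :=
        pow_le_of_le_one (by norm_num) (by norm_num) d.succ_ne_zero
      linarith

/-- if `(c_n)` is a positive sequence with `Σ c_n^d < ∞`, then there
is a constant `K > 0`, depending only on `d` and `Σ c_n^d`, such that the unit
cube `I^d` contains a family of pairwise disjoint axis-parallel subcubes of side
lengths `K·c_n`; equivalently, homotheties `h_n : I^d → I^d` of ratio `K·c_n`
with pairwise disjoint images. -/
theorem stmt12 (d : ℕ) (hd : 0 < d) (S : ℝ) (hS : 0 < S) :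
    ∃ K : ℝ, 0 < K ∧
      ∀ c : ℕ → ℝ, (∀ n, 0 < c n) → Summable (fun n => c n ^ d) →
        (∑' n, c n ^ d) = S →
        ∃ z : ℕ → (Fin d → ℝ),
          (∀ n, Set.Icc (z n) (z n + Function.const (Fin d) (K * c n)) ⊆
            Set.Icc (0 : Fin d → ℝ) 1) ∧
          (∀ m n, m ≠ n →
            Disjoint (Set.Icc (z m) (z m + Function.const (Fin d) (K * c m)))
              (Set.Icc (z n) (z n + Function.const (Fin d) (K * c n)))) := by
  obtain ⟨d, rfl⟩ := Nat.exists_eq_add_one_of_ne_zero hd.ne'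
  set K : ℝ := (8 * S ^ ((d + 1 : ℕ) : ℝ)⁻¹)⁻¹
  have hKS : K ^ (d + 1) * S = (1 / 8) ^ (d + 1) := by
    rw [inv_pow, mul_pow, Real.rpow_inv_natCast_pow hS.le d.succ_ne_zero, one_div_pow]
    field_simp
  refine ⟨K, by positivity, fun c hc hcs hcS => ?_⟩
  refine exists_pairwise_disjoint_cube_subset_unitCube (fun n => mul_pos (by positivity) (hc n))
    (by simpa only [mul_pow] using hcs.mul_left (K ^ (d + 1))) ?_
  simp only [mul_pow]
  rw [tsum_mul_left, hcS, hKS]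
end

section
/- Let d ≥ 1 and let (a_n) be a positive sequence in ℓ^{2d/(d+2)}. Then there exist a constant K > 0 and a map h : HC(I^d; ā) → W_2(I^d) that is a homothetic embedding: W_2(h(x̄), h(ȳ)) = K·d_{ā}(x̄, ȳ) for all x̄, ȳ. -/
open MeasureTheory ENNReal

/-- The unit Euclidean cube `I^d`, as a subtype of `EuclideanSpace ℝ (Fin d)`. -/
def UnitCube (d : ℕ) : Type :=
  {x : EuclideanSpace ℝ (Fin d) // ∀ i, x i ∈ Set.Icc (0:ℝ) 1}

noncomputable instance (d : ℕ) : MetricSpace (UnitCube d) :=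
  inferInstanceAs (MetricSpace {x : EuclideanSpace ℝ (Fin d) // ∀ i, x i ∈ Set.Icc (0:ℝ) 1})

instance (d : ℕ) : MeasurableSpace (UnitCube d) :=
  inferInstanceAs (MeasurableSpace {x : EuclideanSpace ℝ (Fin d) // ∀ i, x i ∈ Set.Icc (0:ℝ) 1})

instance (d : ℕ) : MeasurableSingletonClass (UnitCube d) :=
  inferInstanceAs
    (MeasurableSingletonClass {x : EuclideanSpace ℝ (Fin d) // ∀ i, x i ∈ Set.Icc (0 : ℝ) 1})

lemma UnitCube.dist_eq {d : ℕ} (x y : UnitCube d) : dist x y = dist x.1 y.1 := rfl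

lemma UnitCube.abs_sub_le_dist {d : ℕ} (x y : UnitCube d) (i : Fin d) :
    |x.1 i - y.1 i| ≤ dist x y :=
  (Real.dist_eq _ _).symm.trans_le (PiLp.dist_apply_le x.1 y.1 i)

lemma UnitCube.dist_le_sqrt {d : ℕ} (x y : UnitCube d) : dist x y ≤ √d := by
  rw [UnitCube.dist_eq, EuclideanSpace.dist_eq]
  refine Real.sqrt_le_sqrt ((Finset.sum_le_sum fun i _ => ?_).trans_eq
    (by simp : ∑ _i : Fin d, (1 : ℝ) = d))
  exact pow_le_one₀ dist_nonneg (Real.dist_le_of_mem_Icc_01 (x.2 i) (y.2 i))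

open Finset

section DiracSum

variable {X Y : Type*} [MeasurableSpace X] [MeasurableSpace Y]

noncomputable def diracSum (b : ℕ → ℝ≥0∞) (x : ℕ → X) : Measure X :=
  Measure.sum fun n => b n • Measure.dirac (x n)

lemma map_diracSum {f : X → Y} (hf : Measurable f) (b : ℕ → ℝ≥0∞) (x : ℕ → X) :
    (diracSum b x).map f = diracSum b (f ∘ x) := by
  simp only [diracSum, Measure.map_sum hf.aemeasurable, Measure.map_smul,
    Measure.map_dirac' hf, Function.comp_apply]

lemma isCoupling_diracSum (b : ℕ → ℝ≥0∞) (x y : ℕ → X) :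
    IsCoupling (diracSum b x) (diracSum b y) (diracSum b fun n => (x n, y n)) :=
  ⟨map_diracSum measurable_fst b _, map_diracSum measurable_snd b _⟩

lemma isProbabilityMeasure_diracSum {b : ℕ → ℝ≥0∞} (hb : ∑' n, b n = 1) (x : ℕ → X) :
    IsProbabilityMeasure (diracSum b x) :=
  ⟨by simpa [diracSum, Measure.sum_apply] using hb⟩

variable [MeasurableSingletonClass X]

lemma lintegral_diracSum (b : ℕ → ℝ≥0∞) (x : ℕ → X) (f : X → ℝ≥0∞) :
    ∫⁻ z, f z ∂diracSum b x = ∑' n, b n * f (x n) := by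
  simp [diracSum, lintegral_sum_measure, lintegral_dirac]

lemma diracSum_compl_range (b : ℕ → ℝ≥0∞) (x : ℕ → X) : diracSum b x (Set.range x)ᶜ = 0 := by
  simp [diracSum, Measure.sum_apply _ (Set.countable_range x).measurableSet.compl]

lemma tsum_le_lintegral_of_isCoupling {b : ℕ → ℝ≥0∞} {x y : ℕ → X} {f : X × X → ℝ≥0∞}
    (hf : ∀ n m, f (x n, y n) ≤ f (x n, y m)) {π : Measure (X × X)}
    (hπ : IsCoupling (diracSum b x) (diracSum b y) π) :
    ∑' n, b n * f (x n, y n) ≤ ∫⁻ z, f z ∂π := by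
  have hsnd : ∀ᵐ z ∂π, z.2 ∈ Set.range y := by
    have := diracSum_compl_range b y
    rwa [← hπ.2, Measure.map_apply measurable_snd
      (Set.countable_range y).measurableSet.compl] at this
  calc ∑' n, b n * f (x n, y n) = ∫⁻ u, ⨅ m, f (u, y m) ∂diracSum b x := by
        rw [lintegral_diracSum]
        exact tsum_congr fun n => by rw [le_antisymm (iInf_le _ n) (le_iInf (hf n))]
    _ = ∫⁻ u, ⨅ m, f (u, y m) ∂π.map Prod.fst := by rw [hπ.1]
    _ ≤ ∫⁻ z, ⨅ m, f (z.1, y m) ∂π := lintegral_map_le _ _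
    _ ≤ ∫⁻ z, f z ∂π := lintegral_mono_ae <| hsnd.mono fun z ⟨m, hm⟩ =>
        (iInf_le _ m).trans_eq (by rw [hm])

lemma iInf_lintegral_isCoupling_diracSum (b : ℕ → ℝ≥0∞) {x y : ℕ → X} (f : X × X → ℝ≥0∞)
    (hf : ∀ n m, f (x n, y n) ≤ f (x n, y m)) :
    ⨅ (π : Measure (X × X)) (_ : IsCoupling (diracSum b x) (diracSum b y) π), ∫⁻ z, f z ∂π =
      ∑' n, b n * f (x n, y n) :=
  le_antisymm ((iInf₂_le _ (isCoupling_diracSum b x y)).trans_eq (lintegral_diracSum ..))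
    (le_iInf₂ fun _ => tsum_le_lintegral_of_isCoupling hf)

lemma Wp_diracSum [MetricSpace X] {p : ℝ} (hp : 0 ≤ p) (b : ℕ → ℝ≥0∞) {x y : ℕ → X}
    (hxy : ∀ n m, dist (x n) (y n) ≤ dist (x n) (y m)) :
    Wp p (diracSum b x) (diracSum b y) =
      (∑' n, b n * ENNReal.ofReal (dist (x n) (y n) ^ p)) ^ (1 / p) := by
  rw [Wp, iInf_lintegral_isCoupling_diracSum b (fun z => ENNReal.ofReal (dist z.1 z.2 ^ p))]
  exact fun n m => ENNReal.ofReal_le_ofReal (Real.rpow_le_rpow dist_nonneg (hxy n m) hp)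

theorem Wp_two_diracSum_of_homothetic [MetricSpace X] {D : ℝ} (hD : ∀ x y : X, dist x y ≤ D)
    {P : ℕ → X → X} {r : ℕ → ℝ} (hP : ∀ n x y, dist (P n x) (P n y) = r n * dist x y)
    (hsep : ∀ n n', n ≠ n' → ∀ x y z, dist (P n x) (P n y) ≤ dist (P n x) (P n' z))
    {β : ℕ → ℝ} (hβ : ∀ n, 0 ≤ β n) (hβs : Summable β) (x y : ℕ → X) :
    Wp 2 (diracSum (fun n => ENNReal.ofReal (β n)) fun n => P n (x n))
        (diracSum (fun n => ENNReal.ofReal (β n)) fun n => P n (y n)) =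
      ENNReal.ofReal √(∑' n, β n * (r n * dist (x n) (y n)) ^ 2) := by
  have hxy : ∀ n n', dist (P n (x n)) (P n (y n)) ≤ dist (P n (x n)) (P n' (y n')) := by
    intro n n'
    rcases eq_or_ne n n' with rfl | h
    exacts [le_rfl, hsep n n' h _ _ _]
  have hsum : Summable fun n => β n * dist (P n (x n)) (P n (y n)) ^ 2 :=
    (hβs.mul_right (D ^ 2)).of_nonneg_of_le (fun n => by positivity [hβ n]) fun n =>
      mul_le_mul_of_nonneg_left (pow_le_pow_left₀ dist_nonneg (hD _ _) 2) (hβ n)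
  simp only [hP] at hsum
  rw [Wp_diracSum zero_le_two _ hxy]
  simp only [Real.rpow_two, ← ENNReal.ofReal_mul (hβ _), hP]
  rw [← ENNReal.ofReal_tsum_of_nonneg (fun n => by positivity [hβ n]) hsum,
    ENNReal.ofReal_rpow_of_nonneg (tsum_nonneg fun n => by positivity [hβ n]) (by norm_num),
    Real.sqrt_eq_rpow]

end DiracSum

/-- The cubes `∏ i, [v i, v i + ℓ]` and `∏ i, [w i, w i + ℓ']` are separated by a coordinate
hyperplane. -/
def CubesSeparated {ι : Type*} (v : ι → ℝ) (ℓ : ℝ) (w : ι → ℝ) (ℓ' : ℝ) : Prop :=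
  ∃ i, v i + ℓ ≤ w i ∨ w i + ℓ' ≤ v i

lemma CubesSeparated.symm {ι : Type*} {v w : ι → ℝ} {ℓ ℓ' : ℝ} (h : CubesSeparated v ℓ w ℓ') :
    CubesSeparated w ℓ' v ℓ :=
  let ⟨i, hi⟩ := h; ⟨i, hi.symm⟩

lemma CubesSeparated.div {ι : Type*} {v w : ι → ℝ} {ℓ ℓ' : ℝ} (h : CubesSeparated v ℓ w ℓ')
    {B : ℝ} (hB : 0 < B) :
    CubesSeparated (fun i => v i / B) (ℓ / B) (fun i => w i / B) (ℓ' / B) := by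
  obtain ⟨i, hi⟩ := h
  refine ⟨i, ?_⟩
  simpa only [← add_div, div_le_div_iff_of_pos_right hB] using hi

lemma CubesSeparated.exists_le_abs_sub {ι : Type*} {v w : ι → ℝ} {ℓ ℓ' : ℝ}
    (h : CubesSeparated v ℓ w ℓ') (hℓ' : 0 ≤ ℓ') {x y : ι → ℝ}
    (hx : ∀ i, x i ∈ Set.Icc (v i + ℓ / 4) (v i + ℓ / 2))
    (hy : ∀ i, y i ∈ Set.Icc (w i + ℓ' / 4) (w i + ℓ' / 2)) :
    ∃ i, ℓ / 4 ≤ |x i - y i| := by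
  obtain ⟨i, hi⟩ := h
  obtain ⟨hx₁, hx₂⟩ := hx i
  obtain ⟨hy₁, hy₂⟩ := hy i
  refine ⟨i, ?_⟩
  rcases hi with hi | hi
  · exact le_abs.2 (Or.inr (by linarith))
  · exact le_abs.2 (Or.inl (by linarith))

lemma natCast_mul_add_le_or {a b : ℕ} (hab : a ≠ b) {L : ℝ} (hL : 0 ≤ L) :
    a * L + L ≤ b * L ∨ b * L + L ≤ a * L := by
  rcases hab.lt_or_gt with h | h
  · left
    have : (a : ℝ) + 1 ≤ b := by exact_mod_cast h
    nlinarith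
  · right
    have : (b : ℝ) + 1 ≤ a := by exact_mod_cast h
    nlinarith

section DyadicGrid

variable {e : ℕ} (m : ℕ → ℕ)

noncomputable def slabBase (J : ℕ) : ℝ := ∑ j ∈ range J, m j * 2⁻¹ ^ j

/-- Slab `j` is the region `slabBase m j ≤ x 0 ≤ slabBase m (j + 1)`, tiled by `m j` layers of
cubes of side `2⁻¹ ^ j`; `gridCorner m j p` is the corner of the cube in layer `p.1` at position
`p.2` of the layer. -/
noncomputable def gridCorner (j : ℕ) (p : ℕ × (Fin e → ℕ)) : Fin (e + 1) → ℝ :=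
  Fin.cons (slabBase m j + p.1 * 2⁻¹ ^ j) fun k => p.2 k * 2⁻¹ ^ j

lemma slabBase_mono : Monotone (slabBase m) := fun _ _ h =>
  sum_le_sum_of_subset_of_nonneg (range_subset_range.mpr h) fun _ _ _ => by positivity

lemma gridCorner_mem {j : ℕ} {p : ℕ × (Fin e → ℕ)} (hp₁ : p.1 < m j) (hp₂ : ∀ k, p.2 k < 2 ^ j)
    (i : Fin (e + 1)) :
    0 ≤ gridCorner m j p i ∧ gridCorner m j p i + 2⁻¹ ^ j ≤ max (slabBase m (j + 1)) 1 := by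
  have hL : (0 : ℝ) < 2⁻¹ ^ j := by positivity
  cases i using Fin.cases with
  | zero =>
    have h₁ : (p.1 : ℝ) + 1 ≤ m j := by exact_mod_cast hp₁
    have h₀ : 0 ≤ slabBase m j := sum_nonneg fun _ _ => by positivity
    simp only [gridCorner, Fin.cons_zero, slabBase, sum_range_succ] at h₀ ⊢
    exact ⟨by positivity, le_max_of_le_left (by nlinarith)⟩
  | succ k =>
    have h₁ : (p.2 k : ℝ) + 1 ≤ 2 ^ j := by exact_mod_cast hp₂ k
    have h₂ : (2 : ℝ) ^ j * 2⁻¹ ^ j = 1 := by rw [← mul_pow]; norm_num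
    simp only [gridCorner, Fin.cons_succ]
    exact ⟨by positivity, le_max_of_le_right (by nlinarith)⟩

lemma cubesSeparated_gridCorner_of_lt {j j' : ℕ} (hj : j < j') {p p' : ℕ × (Fin e → ℕ)}
    (hp : p.1 < m j) :
    CubesSeparated (gridCorner m j p) (2⁻¹ ^ j) (gridCorner m j' p') (2⁻¹ ^ j') := by
  refine ⟨0, Or.inl ?_⟩
  have h₁ : (p.1 : ℝ) + 1 ≤ m j := by exact_mod_cast hp
  have h₂ := slabBase_mono m (Nat.succ_le_of_lt hj)
  simp only [gridCorner, Fin.cons_zero, slabBase, sum_range_succ] at h₂ ⊢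
  have : (0 : ℝ) ≤ p'.1 * 2⁻¹ ^ j' := by positivity
  nlinarith [pow_pos (by norm_num : (0 : ℝ) < 2⁻¹) j]

lemma cubesSeparated_gridCorner_of_ne (j : ℕ) {p p' : ℕ × (Fin e → ℕ)} (hp : p ≠ p') :
    CubesSeparated (gridCorner m j p) (2⁻¹ ^ j) (gridCorner m j p') (2⁻¹ ^ j) := by
  have hL : (0 : ℝ) ≤ 2⁻¹ ^ j := by positivity
  by_cases h₁ : p.1 = p'.1
  · obtain ⟨k, hk⟩ := Function.ne_iff.mp fun h₂ => hp (Prod.ext h₁ h₂)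
    exact ⟨k.succ, by simpa [gridCorner] using natCast_mul_add_le_or hk hL⟩
  · refine ⟨0, ?_⟩
    simp only [gridCorner, Fin.cons_zero]
    rcases natCast_mul_add_le_or h₁ hL with h | h
    · exact Or.inl (by linarith)
    · exact Or.inr (by linarith)

lemma cubesSeparated_gridCorner {j j' : ℕ} {p p' : ℕ × (Fin e → ℕ)} (hp : p.1 < m j)
    (hp' : p'.1 < m j') (hne : (j, p) ≠ (j', p')) :
    CubesSeparated (gridCorner m j p) (2⁻¹ ^ j) (gridCorner m j' p') (2⁻¹ ^ j') := by
  rcases lt_trichotomy j j' with h | rfl | h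
  · exact cubesSeparated_gridCorner_of_lt m h hp
  · exact cubesSeparated_gridCorner_of_ne m j fun h => hne (by rw [h])
  · exact (cubesSeparated_gridCorner_of_lt m h hp').symm

end DyadicGrid

lemma natCast_div_add_one_mul_le (N j e : ℕ) :
    ((N / (2 ^ j) ^ e + 1 : ℕ) : ℝ) * 2⁻¹ ^ j ≤
      2 ^ (e + 1) * (N * (2⁻¹ ^ (j + 1)) ^ (e + 1)) + 2⁻¹ ^ j := by
  have hdiv : ((N / (2 ^ j) ^ e : ℕ) : ℝ) ≤ N * (2⁻¹ ^ j) ^ e := by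
    simpa [div_eq_mul_inv] using (Nat.cast_div_le (α := ℝ) (m := N) (n := (2 ^ j) ^ e))
  have key : (N : ℝ) * (2⁻¹ ^ j) ^ e * 2⁻¹ ^ j =
      2 ^ (e + 1) * (N * (2⁻¹ ^ (j + 1)) ^ (e + 1)) := by
    rw [show (2 : ℝ) ^ (e + 1) * (N * (2⁻¹ ^ (j + 1)) ^ (e + 1)) =
      N * (2⁻¹ ^ j) ^ (e + 1) * ((2 : ℝ) ^ (e + 1) * 2⁻¹ ^ (e + 1)) by ring, ← mul_pow]
    norm_num
    ring
  push_cast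
  nlinarith [pow_pos (by norm_num : (0 : ℝ) < 2⁻¹) j]

lemma slabBase_le {e : ℕ} (N : ℕ → ℕ) (J : ℕ)
    (hN : ∑ j ∈ range J, (N j : ℝ) * (2⁻¹ ^ (j + 1)) ^ (e + 1) ≤ 1) :
    slabBase (fun j => N j / (2 ^ j) ^ e + 1) J ≤ 2 ^ (e + 1) + 2 :=
  calc slabBase (fun j => N j / (2 ^ j) ^ e + 1) J
      ≤ ∑ j ∈ range J, ((2 : ℝ) ^ (e + 1) * (N j * (2⁻¹ ^ (j + 1)) ^ (e + 1)) + 2⁻¹ ^ j) :=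
        sum_le_sum fun j _ => natCast_div_add_one_mul_le (N j) j e
    _ = 2 ^ (e + 1) * ∑ j ∈ range J, (N j : ℝ) * (2⁻¹ ^ (j + 1)) ^ (e + 1) +
          ∑ j ∈ range J, (2 : ℝ)⁻¹ ^ j := by
        rw [sum_add_distrib, mul_sum]
    _ ≤ 2 ^ (e + 1) * 1 + 2 := by
        gcongr
        simpa using sum_geometric_two_le J
    _ = 2 ^ (e + 1) + 2 := by ring

lemma exists_injOn_grid (S : Finset ℕ) (e : ℕ) {w : ℕ} (hw : 0 < w) :
    ∃ g : ℕ → ℕ × (Fin e → ℕ), Set.InjOn g S ∧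
      ∀ n ∈ S, (g n).1 < #S / w ^ e + 1 ∧ ∀ k, (g n).2 k < w := by
  classical
  set t := range (#S / w ^ e + 1) ×ˢ Fintype.piFinset fun _ : Fin e => range w
  have hcard : #S ≤ #t := by
    simp only [t, card_product, Fintype.card_piFinset, card_range, prod_const, card_univ,
      Fintype.card_fin]
    have := Nat.lt_div_mul_add (a := #S) (pow_pos hw e)
    rw [add_mul, one_mul]
    omega
  obtain ⟨g, hgt, hinj⟩ :=
    S.finite_toSet.exists_injOn_of_encard_le (t := (↑t : Set (ℕ × (Fin e → ℕ)))) (by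
      simp only [Set.encard_coe_eq_coe_finsetCard]
      exact_mod_cast hcard)
  exact ⟨g, hinj, fun n hn => by simpa [t] using hgt hn⟩

lemma sum_card_mul_le_tsum {f : ℕ → ℝ} (hf : Summable f) (hf₀ : ∀ n, 0 ≤ f n) {s : ℕ → ℕ}
    {δ : ℕ → ℝ} (hδ : ∀ n, δ (s n) ≤ f n) (G : ℕ → Finset ℕ) (hG : ∀ j n, n ∈ G j ↔ s n = j)
    (J : ℕ) : ∑ j ∈ range J, (#(G j) : ℝ) * δ j ≤ ∑' n, f n :=
  calc ∑ j ∈ range J, (#(G j) : ℝ) * δ j ≤ ∑ j ∈ range J, ∑ n ∈ G j, f n :=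
        sum_le_sum fun j _ => by
          simpa using card_nsmul_le_sum (G j) f (δ j) fun n hn => (hG j n).1 hn ▸ hδ n
    _ = ∑ n ∈ (range J).biUnion G, f n := by
        refine (sum_biUnion fun j _ j' _ hjj' => disjoint_left.2 fun n h h' => hjj' ?_).symm
        exact ((hG j n).1 h).symm.trans ((hG j' n).1 h')
    _ ≤ ∑' n, f n := hf.sum_le_tsum _ fun n _ => hf₀ n

theorem exists_cubesSeparated_of_tsum_le_one {e : ℕ} {c : ℕ → ℝ} (hc : ∀ n, 0 < c n)
    (hsum : Summable fun n => c n ^ (e + 1)) (hle : ∑' n, c n ^ (e + 1) ≤ 1) :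
    ∃ (v : ℕ → Fin (e + 1) → ℝ) (ℓ : ℕ → ℝ), (∀ n, c n ≤ ℓ n) ∧
      (∀ n i, 0 ≤ v n i ∧ v n i + ℓ n ≤ 2 ^ (e + 1) + 2) ∧
      Pairwise fun n n' => CubesSeparated (v n) (ℓ n) (v n') (ℓ n') := by
  have hc₁ : ∀ n, c n ≤ 1 := fun n => (pow_le_one_iff_of_nonneg (hc n).le e.succ_ne_zero).1
    ((hsum.le_tsum n fun m _ => by positivity [hc m]).trans hle)
  choose s hs using fun n =>
    exists_nat_pow_near_of_lt_one (hc n) (hc₁ n) (by norm_num : (0 : ℝ) < 2⁻¹) (by norm_num)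
  have hδ : ∀ n, ((2 : ℝ)⁻¹ ^ (s n + 1)) ^ (e + 1) ≤ c n ^ (e + 1) := fun n =>
    pow_le_pow_left₀ (by positivity) (hs n).1.le _
  have hfin : ∀ j, {n | s n = j}.Finite := fun j => by
    have hpos : (0 : ℝ) < (2⁻¹ ^ (j + 1)) ^ (e + 1) := by positivity
    exact (Filter.eventually_cofinite.1 (hsum.tendsto_cofinite_zero.eventually
      (gt_mem_nhds hpos))).subset fun n (hn : s n = j) => not_lt.2 (hn ▸ hδ n)
  set G := fun j => (hfin j).toFinset
  have hG : ∀ j n, n ∈ G j ↔ s n = j := by simp [G]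
  set m := fun j => #(G j) / (2 ^ j) ^ e + 1
  choose g hg_inj hg_lt using fun j => exists_injOn_grid (G j) e (pow_pos two_pos j)
  have hg : ∀ n, (g (s n) n).1 < m (s n) ∧ ∀ k, (g (s n) n).2 k < 2 ^ s n := fun n =>
    hg_lt _ n ((hG _ n).2 rfl)
  have hB : ∀ J, slabBase m J ≤ 2 ^ (e + 1) + 2 := fun J =>
    slabBase_le _ J
      ((sum_card_mul_le_tsum hsum (fun n => by positivity [hc n]) hδ G hG J).trans hle)
  refine ⟨fun n => gridCorner m (s n) (g (s n) n), fun n => 2⁻¹ ^ s n, fun n => (hs n).2,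
    fun n i => ?_, fun n n' hnn' => ?_⟩
  · obtain ⟨h₀, h₁⟩ := gridCorner_mem m (hg n).1 (hg n).2 i
    have : (0 : ℝ) < 2 ^ (e + 1) := by positivity
    exact ⟨h₀, h₁.trans (max_le (hB _) (by linarith))⟩
  · refine cubesSeparated_gridCorner m (hg n).1 (hg n').1 fun h => hnn' ?_
    obtain ⟨hss, hgg⟩ := Prod.mk.inj h
    rw [← hss] at hgg
    exact hg_inj (s n) ((hG _ n).2 rfl) ((hG _ n').2 hss.symm) hgg

theorem exists_cubesSeparated_unitCube {e : ℕ} {c : ℕ → ℝ} (hc : ∀ n, 0 < c n)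
    (hsum : Summable fun n => c n ^ (e + 1)) :
    ∃ κ > 0, ∃ (v : ℕ → Fin (e + 1) → ℝ) (ℓ : ℕ → ℝ), (∀ n, κ * c n ≤ ℓ n) ∧
      (∀ n i, 0 ≤ v n i ∧ v n i + ℓ n ≤ 1) ∧
      Pairwise fun n n' => CubesSeparated (v n) (ℓ n) (v n') (ℓ n') := by
  set T := ∑' n, c n ^ (e + 1) + 1
  have hT : 1 ≤ T := by
    have : 0 ≤ ∑' n, c n ^ (e + 1) := tsum_nonneg fun n => (pow_pos (hc n) (e + 1)).le
    linarith
  have hT₀ : 0 < T := by linarith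
  obtain ⟨v, ℓ, hcℓ, hvℓ, hsep⟩ := exists_cubesSeparated_of_tsum_le_one
    (c := fun n => c n / T) (fun n => div_pos (hc n) hT₀)
    (by simpa only [div_pow] using hsum.div_const (T ^ (e + 1))) (by
      simp only [div_pow]
      rw [tsum_div_const, div_le_one (by positivity)]
      exact (lt_add_one _).le.trans (le_self_pow₀ hT e.succ_ne_zero))
  set B : ℝ := 2 ^ (e + 1) + 2
  have hB : 0 < B := by positivity
  refine ⟨(T * B)⁻¹, by positivity, fun n i => v n i / B, fun n => ℓ n / B, fun n => ?_,
    fun n i => ?_, fun n n' h => (hsep h).div hB⟩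
  · calc (T * B)⁻¹ * c n = c n / T / B := by field_simp
      _ ≤ ℓ n / B := by gcongr; exact hcℓ n
  · obtain ⟨h₀, h₁⟩ := hvℓ n i
    exact ⟨by positivity, by rwa [← add_div, div_le_one hB]⟩

theorem exists_homothetic_separated_subcubes {e : ℕ} {c : ℕ → ℝ} (hc : ∀ n, 0 < c n)
    (hsum : Summable fun n => c n ^ (e + 1)) :
    ∃ K > 0, ∃ P : ℕ → UnitCube (e + 1) → UnitCube (e + 1),
      (∀ n x y, dist (P n x) (P n y) = K * c n * dist x y) ∧
      ∀ n n', n ≠ n' → ∀ x y z, dist (P n x) (P n y) ≤ dist (P n x) (P n' z) := by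
  obtain ⟨κ, hκ, v, ℓ, hcℓ, hvℓ, hsep⟩ := exists_cubesSeparated_unitCube hc hsum
  set K := κ / (4 * (e + 1))
  have hK : 0 < K := by positivity
  have hℓ : ∀ n, 0 ≤ ℓ n := fun n => (mul_pos hκ (hc n)).le.trans (hcℓ n)
  have hside : ∀ n, K * c n * (e + 1) ≤ ℓ n / 4 := fun n =>
    calc K * c n * (e + 1) = κ * c n / 4 := by simp only [K]; field_simp
      _ ≤ ℓ n / 4 := by gcongr; exact hcℓ n
  set q : ℕ → EuclideanSpace ℝ (Fin (e + 1)) → EuclideanSpace ℝ (Fin (e + 1)) :=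
    fun n x => WithLp.toLp 2 (fun i => v n i + ℓ n / 4) + (K * c n) • x
  have hq : ∀ n (x : UnitCube (e + 1)) i,
      q n x.1 i ∈ Set.Icc (v n i + ℓ n / 4) (v n i + ℓ n / 2) := fun n x i => by
    obtain ⟨hx₀, hx₁⟩ := x.2 i
    have : 0 ≤ K * c n := by positivity [hc n]
    simp only [q, PiLp.add_apply, PiLp.smul_apply, smul_eq_mul]
    constructor <;> nlinarith [hside n]
  let P n (x : UnitCube (e + 1)) : UnitCube (e + 1) := ⟨q n x.1, fun i =>
    Set.Icc_subset_Icc (by linarith [(hvℓ n i).1, hℓ n]) (by linarith [(hvℓ n i).2, hℓ n])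
      (hq n x i)⟩
  have hP : ∀ n x y, dist (P n x) (P n y) = K * c n * dist x y := fun n x y => by
    rw [UnitCube.dist_eq, UnitCube.dist_eq, dist_add_left, dist_smul₀,
      Real.norm_of_nonneg (by positivity [hc n])]
  refine ⟨K, hK, P, hP, fun n n' hnn' x y z => ?_⟩
  obtain ⟨i, hi⟩ := (hsep hnn').exists_le_abs_sub (hℓ n') (hq n x) (hq n' z)
  have hdiam : dist x y ≤ e + 1 := (x.dist_le_sqrt y).trans (by
    rw [Real.sqrt_le_left (by positivity)]; push_cast; nlinarith)
  calc dist (P n x) (P n y) = K * c n * dist x y := hP n x y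
    _ ≤ K * c n * (e + 1) := by gcongr; positivity [hc n]
    _ ≤ ℓ n / 4 := hside n
    _ ≤ |(P n x).1 i - (P n' z).1 i| := hi
    _ ≤ dist (P n x) (P n' z) := UnitCube.abs_sub_le_dist _ _ i

lemma rpow_two_div_add_two_pow {a : ℝ} (ha : 0 ≤ a) (d : ℕ) :
    (a ^ (2 / (d + 2 : ℝ))) ^ d = a ^ ((2 * d : ℝ) / (d + 2)) := by
  rw [← Real.rpow_natCast, ← Real.rpow_mul ha]
  ring_nf

lemma rpow_mul_rpow_two_div_add_two_sq {a : ℝ} (ha : 0 < a) (d : ℕ) :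
    a ^ ((2 * d : ℝ) / (d + 2)) * (a ^ (2 / (d + 2 : ℝ))) ^ 2 = a ^ 2 := by
  rw [← Real.rpow_natCast (_ ^ _), ← Real.rpow_mul ha.le, ← Real.rpow_add ha,
    ← Real.rpow_natCast]
  congr 1
  field_simp
  push_cast
  ring

/-- if `(a_n)` is a positive `ℓ^{2d/(d+2)}` sequence, then the
generalized Hilbert cube `HC(I^d; ā)` embeds homothetically into `W₂(I^d)`:
there are `K > 0` and `h` with `W₂(h x̄, h ȳ) = K · d_ā(x̄, ȳ)`. -/
theorem stmt13 (d : ℕ) (hd : 1 ≤ d) (a : ℕ → ℝ) (ha : ∀ n, 0 < a n)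
    (hsum : Summable (fun n => a n ^ ((2 * d : ℝ) / (d + 2)))) :
    ∃ K : ℝ, 0 < K ∧
      ∃ h : (ℕ → UnitCube d) → Measure (UnitCube d),
        (∀ x, IsProbabilityMeasure (h x)) ∧
        ∀ x y : ℕ → UnitCube d,
          Wp 2 (h x) (h y) =
            ENNReal.ofReal
              (K * Real.sqrt (∑' n, a n ^ 2 * dist (x n) (y n) ^ 2)) := by
  obtain ⟨e, rfl⟩ : ∃ e, d = e + 1 := ⟨d - 1, by omega⟩
  set p : ℝ := 2 * (e + 1 : ℕ) / ((e + 1 : ℕ) + 2)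
  set c : ℕ → ℝ := fun n => a n ^ (2 / ((e + 1 : ℕ) + 2 : ℝ))
  obtain ⟨K, hK, P, hP, hsep⟩ := exists_homothetic_separated_subcubes (c := c)
    (fun n => Real.rpow_pos_of_pos (ha n) _)
    (hsum.congr fun n => (rpow_two_div_add_two_pow (ha n).le _).symm)
  set S := ∑' n, a n ^ p
  have hS : 0 < S := hsum.tsum_pos (fun n => (Real.rpow_pos_of_pos (ha n) _).le) 0
    (Real.rpow_pos_of_pos (ha 0) _)
  have hb : ∑' n, ENNReal.ofReal (a n ^ p / S) = 1 := by
    rw [← ENNReal.ofReal_tsum_of_nonneg (fun n => by positivity [ha n]) (hsum.div_const S),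
      tsum_div_const, div_self hS.ne', ENNReal.ofReal_one]
  refine ⟨K / √S, by positivity, fun x => diracSum (fun n => ENNReal.ofReal (a n ^ p / S))
    fun n => P n (x n), fun x => isProbabilityMeasure_diracSum hb _, fun x y => ?_⟩
  rw [Wp_two_diracSum_of_homothetic UnitCube.dist_le_sqrt hP hsep
    (fun n => by positivity [ha n]) (hsum.div_const S)]
  have hterm : ∀ n, a n ^ p / S * (K * c n * dist (x n) (y n)) ^ 2 =
      (K / √S) ^ 2 * (a n ^ 2 * dist (x n) (y n) ^ 2) := fun n => by
    rw [div_pow, Real.sq_sqrt hS.le, ← rpow_mul_rpow_two_div_add_two_sq (ha n)]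
    ring
  rw [tsum_congr hterm, tsum_mul_left, Real.sqrt_mul' _ (tsum_nonneg fun n => by positivity),
    Real.sqrt_sq (by positivity)]
end

section
/- Let μ, ν be finitely supported probability measures on a metric space X with cost c = d^p, and let Π be a c-optimal transport plan between them. Then the support of Π contains no oriented cycle: there do not exist distinct points v_1,…,v_{n-1}, v_n = v_1 with Π({(v_i, v_{i+1})}) > 0 for all i < n and v_i ≠ v_{i+1}. -/
open MeasureTheory ENNReal

/-!
If the support of `π` contained a cycle `v₀ → v₁ → ⋯ → vₙ = v₀`, let `ε > 0` be the least mass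
`π` puts on its edges. Removing mass `ε` from every edge and putting it on the diagonal points
`(vᵢ, vᵢ)` instead leaves both marginals unchanged, since a cycle leaves and enters every vertex
once. The diagonal costs nothing while the removed edges have positive cost, and the cost of `π`
is finite because both marginals are finitely supported, so the new plan is strictly cheaper.
-/

open Finset

namespace MeasureTheory.Measure

variable {α : Type*} [MeasurableSpace α] [MeasurableSingletonClass α]

lemma sum_smul_dirac_le (μ : Measure α) (s : Finset α) : ∑ a ∈ s, μ {a} • dirac a ≤ μ := by
  calc ∑ a ∈ s, μ {a} • dirac a = μ.restrict s := by
        rw [ae_mem_finset_iff.1 (ae_restrict_mem s.measurableSet)]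
        refine Finset.sum_congr rfl fun a ha ↦ ?_
        rw [restrict_apply (measurableSet_singleton a),
          Set.inter_eq_left.2 (Set.singleton_subset_iff.2 ha)]
    _ ≤ μ := restrict_le_self

lemma exists_pos_smul_sum_dirac_le {ι : Type*} {μ : Measure α} {s : Finset ι} {z : ι → α}
    (hz : Set.InjOn z s) (h : ∀ i ∈ s, 0 < μ {z i}) :
    ∃ ε > (0 : ℝ≥0∞), ε • ∑ i ∈ s, dirac (z i) ≤ μ := by
  classical
  refine ⟨s.inf fun i ↦ μ {z i}, (Finset.lt_inf_iff ENNReal.zero_lt_top).2 h, ?_⟩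
  calc (s.inf fun i ↦ μ {z i}) • ∑ i ∈ s, dirac (z i)
      ≤ ∑ i ∈ s, μ {z i} • dirac (z i) := by
        rw [smul_sum]
        exact sum_le_sum fun i hi ↦ IsOrderedSMul.smul_le_smul_right _ _ (Finset.inf_le hi) _
    _ = ∑ a ∈ s.image z, μ {a} • dirac a := (sum_image (f := fun a ↦ μ {a} • dirac a) hz).symm
    _ ≤ μ := sum_smul_dirac_le μ _

end MeasureTheory.Measure

lemma MeasureTheory.lintegral_sub_add_lt {α : Type*} [MeasurableSpace α] {π ρ σ : Measure α}
    [IsFiniteMeasure ρ] {f : α → ℝ≥0∞} (hπ : ∫⁻ x, f x ∂π ≠ ∞) (hρπ : ρ ≤ π)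
    (h : ∫⁻ x, f x ∂σ < ∫⁻ x, f x ∂ρ) : ∫⁻ x, f x ∂(π - ρ + σ) < ∫⁻ x, f x ∂π := by
  have hsplit : ∫⁻ x, f x ∂π = ∫⁻ x, f x ∂(π - ρ) + ∫⁻ x, f x ∂ρ := by
    rw [← lintegral_add_measure, Measure.sub_add_cancel_of_le hρπ]
  rw [lintegral_add_measure, hsplit]
  rw [hsplit] at hπ
  exact ENNReal.add_lt_add_left (ENNReal.add_ne_top.1 hπ).1 h

lemma MeasureTheory.lintegral_smul_sum_dirac {α ι : Type*} [MeasurableSpace α]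
    [MeasurableSingletonClass α] (f : α → ℝ≥0∞) (ε : ℝ≥0∞) (s : Finset ι) (z : ι → α) :
    ∫⁻ x, f x ∂(ε • ∑ i ∈ s, Measure.dirac (z i)) = ε * ∑ i ∈ s, f (z i) := by
  simp only [lintegral_smul_measure, lintegral_finsetSum_measure, lintegral_dirac, smul_eq_mul]

lemma Finset.sum_range_comp_succ_of_eq {M : Type*} [AddCommMonoid M] {f : ℕ → M} {n : ℕ}
    (h : f n = f 0) : ∑ i ∈ range n, f (i + 1) = ∑ i ∈ range n, f i := by
  cases n with
  | zero => simp
  | succ n => rw [sum_range_succ, h, sum_range_succ']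

namespace IsCoupling

variable {X : Type*} [MeasurableSpace X] {μ ν α β : Measure X} {π ρ σ : Measure (X × X)}

lemma dirac (x y : X) :
    IsCoupling (Measure.dirac x) (Measure.dirac y) (Measure.dirac (x, y)) :=
  ⟨Measure.map_dirac' measurable_fst _, Measure.map_dirac' measurable_snd _⟩

lemma add (h₁ : IsCoupling μ ν π) (h₂ : IsCoupling α β ρ) :
    IsCoupling (μ + α) (ν + β) (π + ρ) :=
  ⟨by rw [Measure.map_add _ _ measurable_fst, h₁.1, h₂.1],
    by rw [Measure.map_add _ _ measurable_snd, h₁.2, h₂.2]⟩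

lemma smul (h : IsCoupling μ ν π) (c : ℝ≥0∞) : IsCoupling (c • μ) (c • ν) (c • π) :=
  ⟨by rw [Measure.map_smul, h.1], by rw [Measure.map_smul, h.2]⟩

lemma finset_sum {ι : Type*} {s : Finset ι} {μ ν : ι → Measure X} {π : ι → Measure (X × X)}
    (h : ∀ i ∈ s, IsCoupling (μ i) (ν i) (π i)) :
    IsCoupling (∑ i ∈ s, μ i) (∑ i ∈ s, ν i) (∑ i ∈ s, π i) := by
  induction s using Finset.cons_induction with
  | empty => exact ⟨Measure.map_zero _, Measure.map_zero _⟩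
  | cons i s hi ih =>
    simp only [Finset.sum_cons]
    exact (h i (mem_cons_self i s)).add (ih fun j hj ↦ h j (mem_cons_of_mem hj))

lemma sub_add [IsFiniteMeasure ρ] (h : IsCoupling μ ν π) (hρ : IsCoupling α β ρ)
    (hσ : IsCoupling α β σ) (hρπ : ρ ≤ π) : IsCoupling μ ν (π - ρ + σ) := by
  have hπ : IsCoupling ((π - ρ).map Prod.fst + α) ((π - ρ).map Prod.snd + β) π := by
    simpa only [Measure.sub_add_cancel_of_le hρπ] using
      (IsCoupling.add ⟨rfl, rfl⟩ hρ : IsCoupling _ _ (π - ρ + ρ))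
  rw [← h.1, ← h.2, hπ.1, hπ.2]
  exact IsCoupling.add ⟨rfl, rfl⟩ hσ

lemma isFiniteMeasure [IsFiniteMeasure μ] (h : IsCoupling μ ν π) : IsFiniteMeasure π :=
  have : IsFiniteMeasure (π.map Prod.fst) := h.1 ▸ inferInstance
  Measure.isFiniteMeasure_of_map measurable_fst.aemeasurable

lemma lintegral_ne_top_of_finset [MeasurableSingletonClass X] [IsFiniteMeasure μ]
    (h : IsCoupling μ ν π) {s t : Finset X} (hs : μ (↑s)ᶜ = 0) (ht : ν (↑t)ᶜ = 0)
    {f : X × X → ℝ≥0∞} (hf : ∀ z, f z ≠ ∞) : ∫⁻ z, f z ∂π ≠ ∞ := by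
  have := h.isFiniteMeasure
  have hfst : ∀ᵐ z ∂π, z.1 ∈ s :=
    ae_of_ae_map measurable_fst.aemeasurable (h.1 ▸ ae_iff.2 hs)
  have hsnd : ∀ᵐ z ∂π, z.2 ∈ t :=
    ae_of_ae_map measurable_snd.aemeasurable (h.2 ▸ ae_iff.2 ht)
  have hst : ∀ᵐ z ∂π, z ∈ (↑(s ×ˢ t) : Set (X × X)) := by
    filter_upwards [hfst, hsnd] with z h₁ h₂
    exact mem_coe.2 (mem_product.2 ⟨h₁, h₂⟩)
  rw [← Measure.restrict_eq_self_of_ae_mem hst, lintegral_finset]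
  exact ENNReal.sum_ne_top.2 fun z _ ↦ ENNReal.mul_ne_top (hf z) (measure_ne_top π _)

end IsCoupling

lemma isCoupling_sum_dirac_cycle {X : Type*} [MeasurableSpace X] {v : ℕ → X} {n : ℕ}
    (h : v n = v 0) :
    IsCoupling (∑ i ∈ range n, Measure.dirac (v i)) (∑ i ∈ range n, Measure.dirac (v i))
      (∑ i ∈ range n, Measure.dirac (v i, v (i + 1))) := by
  have := IsCoupling.finset_sum fun i (_ : i ∈ range n) ↦ IsCoupling.dirac (v i) (v (i + 1))
  rwa [sum_range_comp_succ_of_eq (f := fun i ↦ Measure.dirac (v i)) (congrArg _ h)] at this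

lemma isCoupling_sum_dirac_diag {X ι : Type*} [MeasurableSpace X] (v : ι → X) (s : Finset ι) :
    IsCoupling (∑ i ∈ s, Measure.dirac (v i)) (∑ i ∈ s, Measure.dirac (v i))
      (∑ i ∈ s, Measure.dirac (v i, v i)) :=
  IsCoupling.finset_sum fun i _ ↦ IsCoupling.dirac (v i) (v i)

theorem stmt14_general {X : Type*} [MetricSpace X] [MeasurableSpace X] [BorelSpace X]
    (p : ℝ) (hp : 1 ≤ p)
    (μ ν : Measure X) [IsProbabilityMeasure μ]
    (hμ : ∃ s : Finset X, μ (↑s : Set X)ᶜ = 0)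
    (hν : ∃ s : Finset X, ν (↑s : Set X)ᶜ = 0)
    (π : Measure (X × X)) (hπ : IsCoupling μ ν π)
    (hopt : ∀ π' : Measure (X × X), IsCoupling μ ν π' →
      (∫⁻ z, ENNReal.ofReal (dist z.1 z.2 ^ p) ∂π) ≤
        (∫⁻ z, ENNReal.ofReal (dist z.1 z.2 ^ p) ∂π')) :
    ¬ ∃ (n : ℕ) (v : ℕ → X), 2 ≤ n ∧ v n = v 0 ∧
        (∀ i j, i < n → j < n → i ≠ j → v i ≠ v j) ∧
        (∀ i < n, 0 < π {(v i, v (i + 1))}) := by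
  rintro ⟨n, v, hn, hcycle, hinj, hpos⟩
  obtain ⟨s, hs⟩ := hμ
  obtain ⟨t, ht⟩ := hν
  have := hπ.isFiniteMeasure
  have hedges : Set.InjOn (fun i ↦ (v i, v (i + 1))) (range n) := fun i hi j hj hij ↦
    by_contra fun hne ↦ hinj i j (mem_range.1 hi) (mem_range.1 hj) hne (congrArg Prod.fst hij)
  obtain ⟨ε, hε, hρπ⟩ :=
    Measure.exists_pos_smul_sum_dirac_le hedges fun i hi ↦ hpos i (mem_range.1 hi)
  have := isFiniteMeasure_of_le π hρπ
  have hdiag : ∫⁻ z, ENNReal.ofReal (dist z.1 z.2 ^ p)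
      ∂(ε • ∑ i ∈ range n, Measure.dirac (v i, v i)) = 0 := by
    rw [lintegral_smul_sum_dirac]
    simp [Real.zero_rpow (by linarith : p ≠ 0)]
  have hcycle_pos : 0 < ∫⁻ z, ENNReal.ofReal (dist z.1 z.2 ^ p)
      ∂(ε • ∑ i ∈ range n, Measure.dirac (v i, v (i + 1))) := by
    rw [lintegral_smul_sum_dirac]
    refine ENNReal.mul_pos hε.ne' (ne_of_gt ?_)
    have hv : v 0 ≠ v 1 := hinj 0 1 (by omega) (by omega) zero_ne_one
    exact (ENNReal.ofReal_pos.2 (Real.rpow_pos_of_pos (dist_pos.2 hv) p)).trans_le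
      (single_le_sum (f := fun i ↦ ENNReal.ofReal (dist (v i) (v (i + 1)) ^ p))
        (fun _ _ ↦ bot_le) (mem_range.2 (by omega : 0 < n)))
  have hcoup := hπ.sub_add ((isCoupling_sum_dirac_cycle hcycle).smul ε)
    ((isCoupling_sum_dirac_diag v _).smul ε) hρπ
  exact (hopt _ hcoup).not_gt <| lintegral_sub_add_lt
    (hπ.lintegral_ne_top_of_finset hs ht fun _ ↦ ofReal_ne_top) hρπ (hdiag ▸ hcycle_pos)

/-- the support of an optimal transport plan between finitely
supported probability measures (for the cost `d^p`) contains no oriented cycle. -/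
theorem stmt14 {X : Type*} [MetricSpace X] [MeasurableSpace X] [BorelSpace X]
    (p : ℝ) (hp : 1 ≤ p)
    (μ ν : Measure X) [IsProbabilityMeasure μ] [IsProbabilityMeasure ν]
    (hμ : ∃ s : Finset X, μ (↑s : Set X)ᶜ = 0)
    (hν : ∃ s : Finset X, ν (↑s : Set X)ᶜ = 0)
    (π : Measure (X × X)) (hπ : IsCoupling μ ν π)
    (hopt : ∀ π' : Measure (X × X), IsCoupling μ ν π' →
      (∫⁻ z, ENNReal.ofReal (dist z.1 z.2 ^ p) ∂π) ≤
        (∫⁻ z, ENNReal.ofReal (dist z.1 z.2 ^ p) ∂π')) :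
    ¬ ∃ (n : ℕ) (v : ℕ → X), 2 ≤ n ∧ v n = v 0 ∧
        (∀ i j, i < n → j < n → i ≠ j → v i ≠ v j) ∧
        (∀ i < n, 0 < π {(v i, v (i + 1))}) :=
  stmt14_general p hp μ ν hμ hν π hπ hopt
end

section
/- Let G = (V, E, m, m_0, m_1) be an admissible labelled graph (encoding a transport plan between finitely supported measures) whose underlying graph is a forest. If there is r > 0 such that all vertex labels m_0(v) and m_1(v) are integer multiples of r, then every edge label m(e) is an integer multiple of r. -/
/-- A labelled graph: a finite vertex set `V`, a finite set `E` of oriented edges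
(ordered pairs with distinct endpoints), an edge mass function `m` and vertex
labels `m₀`, `m₁`. -/
structure LabelledGraph (X : Type*) where
  V : Finset X
  E : Finset (X × X)
  m : X × X → ℝ
  m0 : X → ℝ
  m1 : X → ℝ

namespace LabelledGraph

variable {X : Type*} [DecidableEq X] (G : LabelledGraph X)

/-- Admissibility of a labelled graph: it encodes a transport plan between the
probability measures given by the vertex labels. -/
def Admissible : Prop :=
  (∀ e ∈ G.E, e.1 ∈ G.V ∧ e.2 ∈ G.V ∧ e.1 ≠ e.2) ∧
  (∑ v ∈ G.V, G.m0 v = 1) ∧ (∑ v ∈ G.V, G.m1 v = 1) ∧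
  (∀ v ∈ G.V, 0 ≤ G.m0 v ∧ G.m0 v ≤ 1) ∧ (∀ v ∈ G.V, 0 ≤ G.m1 v ∧ G.m1 v ≤ 1) ∧
  (∀ e ∈ G.E, 0 < G.m e ∧ G.m e ≤ 1) ∧
  (∀ v ∈ G.V,
    G.m0 v + (∑ e ∈ G.E.filter (fun e => e.2 = v), G.m e)
      - (∑ e ∈ G.E.filter (fun e => e.1 = v), G.m e) = G.m1 v ∧
    (∑ e ∈ G.E.filter (fun e => e.2 = v), G.m e) ≤ G.m1 v ∧
    (∑ e ∈ G.E.filter (fun e => e.1 = v), G.m e) ≤ G.m0 v)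

/-- Unoriented adjacency. -/
def Adj (x y : X) : Prop := (x, y) ∈ G.E ∨ (y, x) ∈ G.E

/-- The underlying unoriented graph is a forest: no antiparallel pair of edges and
no unoriented cycle. -/
def IsForest : Prop :=
  (∀ x y, (x, y) ∈ G.E → (y, x) ∉ G.E) ∧
  ¬ ∃ (n : ℕ) (v : ℕ → X), 3 ≤ n ∧
      (∀ i j, i < n → j < n → i ≠ j → v i ≠ v j) ∧
      (∀ i < n, G.Adj (v i) (v ((i + 1) % n)))

end LabelledGraph

/-!
Summing mass invariance over a set `S` of vertices shows that `∑_{v ∈ S} (m₀ v - m₁ v)` is the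
net mass leaving `S` along edges. In a forest every edge `e = (x, y)` is a bridge, so the
vertices still reachable from `x` once `e` is deleted form a set `S` that `e` is the only edge
to leave or enter. Hence `m e = ∑_{v ∈ S} (m₀ v - m₁ v)`, an integer multiple of `r`.
-/

namespace LabelledGraph

variable {X : Type*} (G : LabelledGraph X)

def toSimpleGraph : SimpleGraph X := SimpleGraph.fromRel fun x y => (x, y) ∈ G.E

theorem isAcyclic_toSimpleGraph (hforest : G.IsForest) : G.toSimpleGraph.IsAcyclic := by
  intro u p hp
  refine hforest.2 ⟨p.length, p.getVert, hp.three_le_length, ?_, ?_⟩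
  · intro i j hi hj hij hv
    exact hij (hp.getVert_injOn' (by simp only [Set.mem_ofPred_eq]; omega)
      (by simp only [Set.mem_ofPred_eq]; omega) hv)
  · intro i hi
    have hsucc : p.getVert ((i + 1) % p.length) = p.getVert (i + 1) := by
      rcases Nat.lt_or_ge (i + 1) p.length with h | h
      · rw [Nat.mod_eq_of_lt h]
      · rw [show i + 1 = p.length by omega, Nat.mod_self, p.getVert_zero, p.getVert_length]
    rw [hsucc]
    exact (p.adj_getVert_succ hi).2

def IsCut (S : Finset X) (e : X × X) : Prop :=
  e.1 ∈ S ∧ e.2 ∉ S ∧ ∀ f ∈ G.E, f ≠ e → (f.1 ∈ S ↔ f.2 ∈ S)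

theorem exists_isCut_of_isForest (hE : ∀ e ∈ G.E, e.1 ∈ G.V ∧ e.2 ∈ G.V ∧ e.1 ≠ e.2)
    (hforest : G.IsForest) {e : X × X} (he : e ∈ G.E) :
    ∃ S ⊆ G.V, G.IsCut S e := by
  classical
  set H := G.toSimpleGraph.deleteEdges {s(e.1, e.2)}
  have hadj : G.toSimpleGraph.Adj e.1 e.2 := ⟨(hE e he).2.2, Or.inl he⟩
  have hbridge : ¬ H.Reachable e.1 e.2 :=
    SimpleGraph.isAcyclic_iff_forall_adj_isBridge.mp (G.isAcyclic_toSimpleGraph hforest) hadj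
  have hHadj : ∀ f ∈ G.E, f ≠ e → H.Adj f.1 f.2 := by
    intro f hf hfe
    rw [SimpleGraph.deleteEdges_adj]
    refine ⟨⟨(hE f hf).2.2, Or.inl hf⟩, ?_⟩
    rw [Set.mem_singleton_iff, Sym2.eq_iff]
    rintro (⟨h1, h2⟩ | ⟨h1, h2⟩)
    · exact hfe (Prod.ext h1 h2)
    · exact hforest.1 e.1 e.2 he (by rw [← h1, ← h2]; exact hf)
  refine ⟨G.V.filter (H.Reachable e.1), Finset.filter_subset _ _,
    Finset.mem_filter.2 ⟨(hE e he).1, SimpleGraph.Reachable.refl _⟩,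
    fun h => hbridge (Finset.mem_filter.1 h).2, ?_⟩
  intro f hf hfe
  simp only [Finset.mem_filter, (hE f hf).1, (hE f hf).2.1, true_and]
  exact ⟨fun h => h.trans (hHadj f hf hfe).reachable,
    fun h => h.trans (hHadj f hf hfe).symm.reachable⟩

variable [DecidableEq X]

theorem sum_sub_eq_sum_crossing (S : Finset X)
    (hbal : ∀ v ∈ S, G.m0 v + (∑ e ∈ G.E.filter (fun e => e.2 = v), G.m e)
      - (∑ e ∈ G.E.filter (fun e => e.1 = v), G.m e) = G.m1 v) :
    ∑ v ∈ S, (G.m0 v - G.m1 v) =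
      ∑ e ∈ G.E, ((if e.1 ∈ S then G.m e else 0) - (if e.2 ∈ S then G.m e else 0)) := by
  have hflow : ∀ v ∈ S, G.m0 v - G.m1 v =
      ∑ e ∈ G.E.filter (fun e => e.1 = v), G.m e - ∑ e ∈ G.E.filter (fun e => e.2 = v), G.m e :=
    fun v hv => by linarith [hbal v hv]
  rw [Finset.sum_congr rfl hflow, Finset.sum_sub_distrib, Finset.sum_sub_distrib,
    Finset.sum_fiberwise_eq_sum_filter, Finset.sum_fiberwise_eq_sum_filter,
    Finset.sum_filter, Finset.sum_filter]

theorem m_eq_sum_sub_of_isCut {S : Finset X} {e : X × X} (he : e ∈ G.E)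
    (hbal : ∀ v ∈ S, G.m0 v + (∑ e ∈ G.E.filter (fun e => e.2 = v), G.m e)
      - (∑ e ∈ G.E.filter (fun e => e.1 = v), G.m e) = G.m1 v)
    (hS : G.IsCut S e) :
    G.m e = ∑ v ∈ S, (G.m0 v - G.m1 v) := by
  obtain ⟨hfst, hsnd, hcross⟩ := hS
  rw [G.sum_sub_eq_sum_crossing S hbal, Finset.sum_eq_single_of_mem e he]
  · simp [hfst, hsnd]
  · intro f hf hfe
    simp [hcross f hf hfe]

end LabelledGraph

theorem exists_int_mul_iff_mem_zmultiples {R : Type*} [Ring R] {x r : R} :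
    (∃ z : ℤ, x = z * r) ↔ x ∈ AddSubgroup.zmultiples r := by
  simp [AddSubgroup.mem_zmultiples_iff, eq_comm]

theorem stmt15_general {X : Type*} [DecidableEq X] (G : LabelledGraph X)
    (hadm : G.Admissible) (hforest : G.IsForest)
    (r : ℝ)
    (hm0 : ∀ v ∈ G.V, ∃ z : ℤ, G.m0 v = z * r)
    (hm1 : ∀ v ∈ G.V, ∃ z : ℤ, G.m1 v = z * r) :
    ∀ e ∈ G.E, ∃ z : ℤ, G.m e = z * r := by
  obtain ⟨hE, -, -, -, -, -, hbal⟩ := hadm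
  intro e he
  obtain ⟨S, hSV, hS⟩ := G.exists_isCut_of_isForest hE hforest he
  rw [G.m_eq_sum_sub_of_isCut he (fun v hv => (hbal v (hSV hv)).1) hS,
    exists_int_mul_iff_mem_zmultiples]
  refine AddSubgroup.sum_mem _ fun v hv => sub_mem ?_ ?_
  · exact exists_int_mul_iff_mem_zmultiples.mp (hm0 v (hSV hv))
  · exact exists_int_mul_iff_mem_zmultiples.mp (hm1 v (hSV hv))

/-- in an admissible labelled graph which is a forest, if all vertex
labels are integer multiples of `r > 0`, then so are all edge labels. -/
theorem stmt15 {X : Type*} [DecidableEq X] (G : LabelledGraph X)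
    (hadm : G.Admissible) (hforest : G.IsForest)
    (r : ℝ) (hr : 0 < r)
    (hm0 : ∀ v ∈ G.V, ∃ z : ℤ, G.m0 v = z * r)
    (hm1 : ∀ v ∈ G.V, ∃ z : ℤ, G.m1 v = z * r) :
    ∀ e ∈ G.E, ∃ z : ℤ, G.m e = z * r :=
  stmt15_general G hadm hforest r hm0 hm1
end

section
/- Let X be a compact metric space of finite upper Minkowski dimension d. Then the space C(X) of nonempty closed subsets of X with the Hausdorff metric satisfies: for every d' > d and all sufficiently small ε, C(X) can be covered by at most 2^{(1/ε)^{d'}} sets of diameter at most ε; hence crit_P(C(X)) ≤ d in the power-exponential scale. -/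
open Filter Topology ENNReal TopologicalSpace

/-- The minimal number of balls of radius `ε` needed to cover `A`. -/
noncomputable def coverNum {X : Type*} [MetricSpace X] (A : Set X) (ε : ℝ) : ℕ :=
  sInf {n | ∃ t : Finset X, t.card = n ∧ A ⊆ ⋃ x ∈ t, Metric.ball x ε}

private lemma half_tendsto : Tendsto (fun ε : ℝ => ε / 2) (𝓝[>] (0:ℝ)) (𝓝[>] (0:ℝ)) := by
  apply tendsto_nhdsWithin_of_tendsto_nhds_of_eventually_within
  · exact (((continuous_id.div_const 2).tendsto' 0 0 (by norm_num)).mono_left nhdsWithin_le_nhds)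
  · filter_upwards [self_mem_nhdsWithin] with ε hε
    exact Set.mem_Ioi.2 (div_pos hε two_pos)

private lemma aux_ev (C : ℝ) {a b : ℝ} (hab : a < b) :
    ∀ᶠ ε in 𝓝[>] (0:ℝ), C * (2 / ε) ^ a ≤ (1 / ε) ^ b := by
  have h1 : Tendsto (fun ε : ℝ => 1 / ε) (𝓝[>] (0:ℝ)) atTop := by
    simpa [one_div] using (tendsto_inv_nhdsGT_zero (𝕜 := ℝ))
  have h2 : Tendsto (fun ε : ℝ => (1 / ε) ^ (b - a)) (𝓝[>] (0:ℝ)) atTop :=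
    (tendsto_rpow_atTop (by linarith)).comp h1
  filter_upwards [h2.eventually_ge_atTop (C * 2 ^ a), self_mem_nhdsWithin] with ε h hε
  have hε' : (0:ℝ) < ε := hε
  have hu : (0:ℝ) < 1 / ε := by positivity
  have e1 : (2 / ε : ℝ) ^ a = 2 ^ a * (1 / ε) ^ a := by
    rw [← Real.mul_rpow (by norm_num) hu.le, mul_one_div]
  have e2 : (1 / ε : ℝ) ^ b = (1 / ε) ^ (b - a) * (1 / ε) ^ a := by
    rw [← Real.rpow_add hu, sub_add_cancel]
  rw [e1, e2, ← mul_assoc]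
  exact mul_le_mul_of_nonneg_right h (Real.rpow_nonneg hu.le a)

private lemma key {X : Type*} [MetricSpace X] [CompactSpace X] (d : ℝ) (hd : 0 ≤ d)
    (hdim : ∀ d' : ℝ, d < d' → ∀ᶠ ε in 𝓝[>] (0:ℝ),
      (coverNum (Set.univ : Set X) ε : ℝ) ≤ (1 / ε) ^ d')
    (d' : ℝ) (hd' : d < d') :
    ∀ᶠ ε in 𝓝[>] (0:ℝ),
      ∃ (n : ℕ) (F : Fin n → Set (NonemptyCompacts X)),
        (n : ℝ) ≤ 2 ^ ((1 / ε) ^ d') ∧ (⋃ i, F i) = Set.univ ∧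
        ∀ i, Metric.diam (F i) ≤ ε := by
  classical
  set d'' := (d + d') / 2 with hd''def
  have hdd : d < d'' := by rw [hd''def]; linarith
  have hdd' : d'' < d' := by rw [hd''def]; linarith
  filter_upwards [half_tendsto.eventually (hdim d'' hdd), aux_ev 1 hdd',
    self_mem_nhdsWithin] with ε hcov harith hε
  have hε' : (0:ℝ) < ε := hε
  have hhalf : 1 / (ε / 2) = 2 / ε := by rw [one_div, inv_div]
  rw [hhalf] at hcov
  rw [one_mul] at harith
  -- a finite cover of X by balls of radius ε/2 of minimal cardinality
  have hne : {n | ∃ t : Finset X, t.card = n ∧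
      (Set.univ : Set X) ⊆ ⋃ x ∈ t, Metric.ball x (ε / 2)}.Nonempty := by
    obtain ⟨t, ht⟩ := isCompact_univ.elim_finite_subcover
      (fun x : X => Metric.ball x (ε / 2)) (fun x => Metric.isOpen_ball)
      (fun x _ => Set.mem_iUnion.2 ⟨x, Metric.mem_ball_self (by linarith)⟩)
    exact ⟨t.card, t, rfl, ht⟩
  obtain ⟨t, htc, htcov⟩ := Nat.sInf_mem hne
  have hN : (t.card : ℝ) ≤ (1 / ε) ^ d' := by
    rw [htc]; exact le_trans hcov harith
  -- the pattern map
  set Φ : NonemptyCompacts X → Finset X :=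
    fun A => t.filter (fun x => (Metric.ball x (ε / 2) ∩ (A : Set X)).Nonempty) with hΦdef
  have main : ∀ A B : NonemptyCompacts X, Φ A = Φ B →
      ∀ a ∈ (A : Set X), ∃ b ∈ (B : Set X), dist a b ≤ ε := by
    intro A B hAB a ha
    obtain ⟨x, hxt, hax⟩ : ∃ x ∈ t, a ∈ Metric.ball x (ε / 2) := by
      simpa using htcov (Set.mem_univ a)
    have hxA : x ∈ Φ A := Finset.mem_filter.2 ⟨hxt, ⟨a, hax, ha⟩⟩
    rw [hAB] at hxA
    obtain ⟨hxt', b, hbx, hbB⟩ := Finset.mem_filter.1 hxA |>.imp id id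
    refine ⟨b, hbB, ?_⟩
    have h1 : dist a x < ε / 2 := hax
    have h2 : dist b x < ε / 2 := hbx
    calc dist a b ≤ dist a x + dist x b := dist_triangle a x b
      _ = dist a x + dist b x := by rw [dist_comm x b]
      _ ≤ ε := by linarith
  set n := 2 ^ t.card with hndef
  have hcard : t.powerset.card = n := by rw [Finset.card_powerset, hndef]
  set e : {S // S ∈ t.powerset} ≃ Fin n := t.powerset.equivFinOfCardEq hcard with hedef
  refine ⟨n, fun i => {A | Φ A = (e.symm i : Finset X)}, ?_, ?_, ?_⟩
  · -- cardinality bound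
    have : (n : ℝ) = (2:ℝ) ^ ((t.card : ℝ)) := by
      rw [hndef, Real.rpow_natCast]; push_cast; ring
    rw [this]
    exact Real.rpow_le_rpow_of_exponent_le (by norm_num) hN
  · -- covering
    apply Set.eq_univ_iff_forall.2
    intro A
    have hmem : Φ A ∈ t.powerset := Finset.mem_powerset.2 (Finset.filter_subset _ _)
    exact Set.mem_iUnion.2 ⟨e ⟨Φ A, hmem⟩, by simp⟩
  · -- diameter bound
    intro i
    apply Metric.diam_le_of_forall_dist_le (by linarith)
    intro A hA B hB
    rw [Metric.NonemptyCompacts.dist_eq]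
    have hAB : Φ A = Φ B := hA.trans hB.symm
    exact Metric.hausdorffDist_le_of_mem_dist (by linarith)
      (main A B hAB) (main B A hAB.symm)

/-- if `X` is a compact metric space of upper Minkowski dimension at
most `d`, then the space `C(X)` of nonempty closed subsets of `X` (here: nonempty
compact subsets, with the Hausdorff metric) can be covered, for every `d' > d`
and all small `ε`, by at most `2^{(1/ε)^{d'}}` sets of diameter at most `ε`;
hence its power-exponential (Minkowski) critical parameter is at most `d`. -/
theorem stmt18 {X : Type*} [MetricSpace X] [CompactSpace X] (d : ℝ) (hd : 0 ≤ d)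
    (hdim : ∀ d' : ℝ, d < d' → ∀ᶠ ε in 𝓝[>] (0:ℝ),
      (coverNum (Set.univ : Set X) ε : ℝ) ≤ (1 / ε) ^ d') :
    (∀ d' : ℝ, d < d' → ∀ᶠ ε in 𝓝[>] (0:ℝ),
      ∃ (n : ℕ) (F : Fin n → Set (NonemptyCompacts X)),
        (n : ℝ) ≤ 2 ^ ((1 / ε) ^ d') ∧
        (⋃ i, F i) = Set.univ ∧
        ∀ i, Metric.diam (F i) ≤ ε) ∧
    sInf {s : ℝ | 0 < s ∧
        Filter.liminf (fun ε : ℝ =>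
            (coverNum (Set.univ : Set (NonemptyCompacts X)) ε : ℝ≥0∞) *
              ENNReal.ofReal (Real.exp (-(1 / ε) ^ s)))
          (𝓝[>] (0:ℝ)) < ⊤} ≤ d := by
  classical
  refine ⟨fun d' hd' => key d hd hdim d' hd', ?_⟩
  set S := {s : ℝ | 0 < s ∧
      Filter.liminf (fun ε : ℝ =>
          (coverNum (Set.univ : Set (NonemptyCompacts X)) ε : ℝ≥0∞) *
            ENNReal.ofReal (Real.exp (-(1 / ε) ^ s)))
        (𝓝[>] (0:ℝ)) < ⊤} with hSdef
  have hsub : Set.Ioi d ⊆ S := by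
    intro s hs
    have hds : d < s := hs
    have hs0 : 0 < s := lt_of_le_of_lt hd hds
    refine ⟨hs0, ?_⟩
    have hev : ∀ᶠ ε in 𝓝[>] (0:ℝ),
        (coverNum (Set.univ : Set (NonemptyCompacts X)) ε : ℝ≥0∞) *
          ENNReal.ofReal (Real.exp (-(1 / ε) ^ s)) ≤ 1 := by
      by_cases hE : IsEmpty (NonemptyCompacts X)
      · filter_upwards [self_mem_nhdsWithin] with ε _
        have h0 : coverNum (Set.univ : Set (NonemptyCompacts X)) ε = 0 := by
          apply Nat.sInf_eq_zero.2
          exact Or.inl ⟨∅, Finset.card_empty, by simp [Set.univ_eq_empty_iff.2 hE]⟩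
        simp [h0]
      · have hNE : Nonempty (NonemptyCompacts X) := not_isEmpty_iff.1 hE
        set d' := (d + s) / 2 with hd'def
        have hdd' : d < d' := by rw [hd'def]; linarith
        have hd's : d' < s := by rw [hd'def]; linarith
        filter_upwards [half_tendsto.eventually (key d hd hdim d' hdd'),
          aux_ev (Real.log 2) hd's, self_mem_nhdsWithin] with ε hk harith hε
        have hε' : (0:ℝ) < ε := hε
        obtain ⟨n, F, hn, hcov, hdiam⟩ := hk
        have hhalf : 1 / (ε / 2) = 2 / ε := by rw [one_div, inv_div]
        rw [hhalf] at hn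
        -- centers
        set c : Fin n → NonemptyCompacts X :=
          fun i => if h : (F i).Nonempty then h.some else Classical.arbitrary _ with hcdef
        set tset : Finset (NonemptyCompacts X) := Finset.image c Finset.univ with htsetdef
        have hcover : (Set.univ : Set (NonemptyCompacts X)) ⊆
            ⋃ x ∈ tset, Metric.ball x ε := by
          intro A _
          have : A ∈ ⋃ i, F i := hcov.symm ▸ Set.mem_univ A
          obtain ⟨i, hAi⟩ := Set.mem_iUnion.1 this
          have hFn : (F i).Nonempty := ⟨A, hAi⟩
          have hci : c i ∈ F i := by rw [hcdef]; simp only [dif_pos hFn]; exact hFn.some_mem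
          have hbdd : Bornology.IsBounded (F i) :=
            (isCompact_univ.isBounded).subset (Set.subset_univ _)
          have hdist : dist A (c i) < ε :=
            lt_of_le_of_lt (le_trans (Metric.dist_le_diam_of_mem hbdd hAi hci) (hdiam i))
              (by linarith)
          exact Set.mem_biUnion (Finset.mem_image_of_mem c (Finset.mem_univ i))
            (Metric.mem_ball.2 hdist)
        have hcN : coverNum (Set.univ : Set (NonemptyCompacts X)) ε ≤ n := by
          refine le_trans (Nat.sInf_le ⟨tset, rfl, hcover⟩) ?_
          calc tset.card ≤ Finset.univ.card := Finset.card_image_le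
            _ = n := by simp
        -- real arithmetic: n * exp(-(1/ε)^s) ≤ 1
        have hreal : (n : ℝ) * Real.exp (-(1 / ε) ^ s) ≤ 1 := by
          have h2 : (2:ℝ) ^ ((2 / ε) ^ d') = Real.exp (Real.log 2 * (2 / ε) ^ d') :=
            Real.rpow_def_of_pos two_pos _
          calc (n : ℝ) * Real.exp (-(1 / ε) ^ s)
              ≤ (2:ℝ) ^ ((2 / ε) ^ d') * Real.exp (-(1 / ε) ^ s) :=
                mul_le_mul_of_nonneg_right hn (Real.exp_pos _).le
            _ = Real.exp (Real.log 2 * (2 / ε) ^ d' + -(1 / ε) ^ s) := by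
                rw [h2, ← Real.exp_add]
            _ ≤ Real.exp 0 := Real.exp_le_exp.2 (by linarith)
            _ = 1 := Real.exp_zero
        calc (coverNum (Set.univ : Set (NonemptyCompacts X)) ε : ℝ≥0∞) *
              ENNReal.ofReal (Real.exp (-(1 / ε) ^ s))
            ≤ (n : ℝ≥0∞) * ENNReal.ofReal (Real.exp (-(1 / ε) ^ s)) :=
              mul_le_mul_left (Nat.cast_le.2 hcN) _
          _ = ENNReal.ofReal ((n : ℝ) * Real.exp (-(1 / ε) ^ s)) := by
              rw [ENNReal.ofReal_mul (by positivity), ENNReal.ofReal_natCast]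
          _ ≤ ENNReal.ofReal 1 := ENNReal.ofReal_le_ofReal hreal
          _ = 1 := ENNReal.ofReal_one
    exact lt_of_le_of_lt (liminf_le_of_frequently_le hev.frequently) one_lt_top
  have hbdd : BddBelow S := ⟨0, fun s hs => hs.1.le⟩
  calc sInf S ≤ sInf (Set.Ioi d) := csInf_le_csInf hbdd ⟨d + 1, by simp⟩ hsub
    _ = d := csInf_Ioi
end

section
/- Let X contain a bi-Lipschitz image of the Euclidean cube I^d. Then for every d' > d there exist a constant C > 0 and homotheties h_n : I^d → I^d of ratio C·n^{−d'} with images pairwise separated by distance at least C·n^{−d'}, and the map (x_1, x_2, …) ↦ closure of { h_n(x_n) : n ∈ ℕ } defines a homothetic embedding of ratio C from the Banach cube BC(I^d, ∞, (n^{−d'})) into the space C(I^d) of closed subsets of I^d with the Hausdorff metric. -/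
open Topology TopologicalSpace

/-!
The `n`-th homothety shrinks the cube by `C·s_n`, `s_n = (n+1)^{-d'}`, and translates it along
the first axis, so that the images are stacked in the order of decreasing `n`. Writing
`T_n = ∑_{k ≥ n} s_k` (finite since `d' > 1`), the `n`-th image occupies the slab
`C·[(K+1)T_n - s_n, (K+1)T_n]`, so consecutive slabs, and hence all pairs of slabs with indices
`m < n`, are separated by at least `C·K·s_m`. Choosing `K` at least the diameter of the cube, the
point `h_n(x_n)` is then nearer to `h_n(y_n)` than to any other `h_m(y_m)`, so the Hausdorff
distance of the two closures is attained termwise.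
-/

open Set Metric Bornology

theorem hausdorffDist_range_eq_iSup_dist {α ι : Type*} [PseudoMetricSpace α] [Nonempty ι]
    {p q : ι → α} (hp : IsBounded (range p)) (hq : IsBounded (range q))
    (hpq : ∀ m n, dist (p n) (q n) ≤ dist (p n) (q m)) :
    hausdorffDist (range p) (range q) = ⨆ n, dist (p n) (q n) := by
  have hbdd : BddAbove (range fun n => dist (p n) (q n)) :=
    ⟨diam (range p ∪ range q), by
      rintro _ ⟨n, rfl⟩
      exact dist_le_diam_of_mem (hp.union hq) (.inl ⟨n, rfl⟩) (.inr ⟨n, rfl⟩)⟩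
  apply le_antisymm
  · apply hausdorffDist_le_of_mem_dist (Real.iSup_nonneg fun _ => dist_nonneg)
    · rintro _ ⟨n, rfl⟩
      exact ⟨q n, mem_range_self n, le_ciSup hbdd n⟩
    · rintro _ ⟨n, rfl⟩
      exact ⟨p n, mem_range_self n, dist_comm (q n) (p n) ▸ le_ciSup hbdd n⟩
  · refine ciSup_le fun n => ?_
    have hfin := hausdorffEDist_ne_top_of_nonempty_of_bounded (range_nonempty p)
      (range_nonempty q) hp hq
    refine le_trans ?_ (infDist_le_hausdorffDist_of_mem (mem_range_self n) hfin)
    refine le_of_not_gt fun hlt => ?_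
    obtain ⟨_, ⟨m, rfl⟩, hm⟩ := (infDist_lt_iff (range_nonempty q)).1 hlt
    exact (hpq m n).not_gt hm

theorem hausdorffDist_closure_range_eq_iSup {α ι : Type*} [PseudoMetricSpace α] [BoundedSpace α]
    [Nonempty ι] {h : ι → α → α}
    (hsep : ∀ m n, m ≠ n → ∀ x y z w, dist (h n x) (h n y) ≤ dist (h n z) (h m w))
    (x y : ι → α) :
    hausdorffDist (closure (range fun n => h n (x n))) (closure (range fun n => h n (y n))) =
      ⨆ n, dist (h n (x n)) (h n (y n)) := by
  rw [hausdorffDist_closure, hausdorffDist_range_eq_iSup_dist (.all _) (.all _)]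
  intro m n
  obtain rfl | hmn := eq_or_ne m n
  exacts [le_rfl, hsep m n hmn _ _ _ _]

section Stacking

variable {s : ℕ → ℝ}

theorem tsum_nat_add_eq_add_tsum_succ (hs : Summable s) (n : ℕ) :
    ∑' k, s (k + n) = s n + ∑' k, s (k + (n + 1)) := by
  rw [((summable_nat_add_iff n).2 hs).tsum_eq_zero_add, zero_add]
  simp only [add_right_comm _ 1 n, add_assoc]

theorem le_tsum_nat_add_sub_tsum_nat_add (hs : Summable s) (h0 : ∀ n, 0 ≤ s n) {m n : ℕ}
    (hmn : m < n) : s m ≤ ∑' k, s (k + m) - ∑' k, s (k + n) := by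
  have hanti : Antitone fun n => ∑' k, s (k + n) := antitone_nat_of_succ_le fun n => by
    rw [tsum_nat_add_eq_add_tsum_succ hs n]
    linarith [h0 n]
  linarith [tsum_nat_add_eq_add_tsum_succ hs m, hanti (Nat.succ_le_of_lt hmn)]

theorem exists_stacked_intervals (hs : Summable s) (hpos : ∀ n, 0 < s n) {K : ℝ} (hK : 0 ≤ K) :
    ∃ C > 0, ∃ a : ℕ → ℝ, (∀ n, 0 ≤ a n) ∧ (∀ n, a n + C * s n ≤ 1) ∧
      ∀ m n, m < n → a n + C * s n + C * K * s m ≤ a m := by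
  set T : ℕ → ℝ := fun n => ∑' k, s (k + n)
  have hT_step : ∀ n, T n = s n + T (n + 1) := tsum_nat_add_eq_add_tsum_succ hs
  have hT_nonneg : ∀ n, 0 ≤ T n := fun n => tsum_nonneg fun k => (hpos _).le
  have hT_gap : ∀ m n, m < n → s m ≤ T m - T n := fun m n =>
    le_tsum_nat_add_sub_tsum_nat_add hs fun k => (hpos k).le
  have hT0 : 0 < (K + 1) * T 0 := by nlinarith [hT_step 0, hT_nonneg 1, hpos 0]
  refine ⟨((K + 1) * T 0)⁻¹, inv_pos.2 hT0, fun n => ((K + 1) * T 0)⁻¹ * ((K + 1) * T n - s n),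
    fun n => ?_, fun n => ?_, fun m n hmn => ?_⟩
  · have hsT : s n ≤ T n := by linarith [hT_step n, hT_nonneg (n + 1)]
    have : 0 ≤ (K + 1) * T n - s n := by nlinarith [hT_nonneg n]
    positivity
  · rw [← mul_add, sub_add_cancel, inv_mul_le_one₀ hT0]
    have hT_anti : T n ≤ T 0 := by
      rcases n.eq_zero_or_pos with rfl | hn
      exacts [le_rfl, by linarith [hT_gap 0 n hn, hpos 0]]
    gcongr
  · simp only [mul_assoc, ← mul_add]
    gcongr
    nlinarith [hT_gap m n hmn]

end Stacking

namespace UnitCube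

variable {d : ℕ}

instance : CompactSpace (UnitCube d) := by
  have : IsCompact {x : EuclideanSpace ℝ (Fin d) | ∀ i, x i ∈ Icc (0 : ℝ) 1} := by
    convert (EuclideanSpace.equiv (Fin d) ℝ).toHomeomorph.isCompact_preimage.2
      (isCompact_univ_pi fun _ => isCompact_Icc (a := (0 : ℝ)) (b := 1)) using 1
    ext x
    simp only [mem_preimage, mem_univ_pi]
    rfl
  exact isCompact_iff_compactSpace.mp this

noncomputable def homothety (i : Fin d) {a r : ℝ} (ha : 0 ≤ a) (hr : 0 ≤ r) (har : a + r ≤ 1)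
    (x : UnitCube d) : UnitCube d :=
  ⟨a • EuclideanSpace.single i 1 + r • x.1, fun j => by
    have hx := x.2 j
    simp only [PiLp.add_apply, PiLp.smul_apply, PiLp.single_apply, smul_eq_mul]
    constructor <;> split_ifs <;> nlinarith [hx.1, hx.2]⟩

variable {i : Fin d} {a r : ℝ} {ha : 0 ≤ a} {hr : 0 ≤ r} {har : a + r ≤ 1}

theorem homothety_apply_self (x : UnitCube d) :
    (homothety i ha hr har x).1 i = a + r * x.1 i := by
  simp [homothety]

theorem dist_homothety (x y : UnitCube d) :
    dist (homothety i ha hr har x) (homothety i ha hr har y) = r * dist x y := by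
  change dist (a • _ + r • x.1) (a • _ + r • y.1) = r * dist x.1 y.1
  rw [dist_add_left, dist_smul₀, Real.norm_of_nonneg hr]

theorem sub_le_dist_homothety {b s : ℝ} {hb : 0 ≤ b} {hs : 0 ≤ s} {hbs : b + s ≤ 1}
    (x y : UnitCube d) :
    a - (b + s) ≤ dist (homothety i ha hr har x) (homothety i hb hs hbs y) :=
  calc a - (b + s) ≤ (homothety i ha hr har x).1 i - (homothety i hb hs hbs y).1 i := by
        rw [homothety_apply_self, homothety_apply_self]
        nlinarith [(x.2 i).1, (y.2 i).2]
    _ ≤ dist ((homothety i ha hr har x).1 i) ((homothety i hb hs hbs y).1 i) :=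
        (le_abs_self _).trans (Real.dist_eq _ _).ge
    _ ≤ _ := PiLp.dist_apply_le _ _ _

theorem exists_stacked_homotheties (hd : 1 ≤ d) {s : ℕ → ℝ} (hs : Summable s)
    (hpos : ∀ n, 0 < s n) {K : ℝ} (hK : 0 ≤ K) :
    ∃ C > 0, ∃ h : ℕ → UnitCube d → UnitCube d,
      (∀ n x y, dist (h n x) (h n y) = C * s n * dist x y) ∧
      ∀ m n, m ≠ n → ∀ x y, C * K * s (min m n) ≤ dist (h m x) (h n y) := by
  obtain ⟨C, hC, a, ha0, ha1, hgap⟩ := exists_stacked_intervals hs hpos hK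
  have hCs : ∀ n, 0 ≤ C * s n := fun n => by have := hpos n; positivity
  refine ⟨C, hC, fun n => homothety ⟨0, hd⟩ (ha0 n) (hCs n) (ha1 n),
    fun n => dist_homothety, fun m n hmn x y => ?_⟩
  rcases hmn.lt_or_gt with hlt | hlt
  · rw [min_eq_left hlt.le]
    exact (le_sub_iff_add_le'.2 (hgap m n hlt)).trans (sub_le_dist_homothety x y)
  · rw [min_eq_right hlt.le, dist_comm]
    exact (le_sub_iff_add_le'.2 (hgap n m hlt)).trans (sub_le_dist_homothety y x)

theorem exists_separated_homotheties (hd : 1 ≤ d) {s : ℕ → ℝ} (hs : Summable s)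
    (hpos : ∀ n, 0 < s n) (hanti : Antitone s) :
    ∃ C > 0, ∃ h : ℕ → UnitCube d → UnitCube d,
      (∀ n x y, dist (h n x) (h n y) = C * s n * dist x y) ∧
      (∀ m n, m ≠ n → ∀ x y, C * s (max m n) ≤ dist (h m x) (h n y)) ∧
      ∀ m n, m ≠ n → ∀ x y z w, dist (h n x) (h n y) ≤ dist (h n z) (h m w) := by
  set D := diam (univ : Set (UnitCube d))
  have hD : ∀ x y : UnitCube d, dist x y ≤ D := fun x y =>
    dist_le_diam_of_mem (.all _) (mem_univ x) (mem_univ y)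
  obtain ⟨C, hC, h, h_dist, h_sep⟩ :=
    exists_stacked_homotheties hd hs hpos (zero_le_one.trans (le_max_right D 1))
  refine ⟨C, hC, h, h_dist, fun m n hmn x y => ?_, fun m n hmn x y z w => ?_⟩
  · calc C * s (max m n) ≤ C * max D 1 * s (min m n) := by
          rw [mul_assoc]
          gcongr
          nlinarith [le_max_right D 1, hanti (min_le_max (a := m) (b := n)), hpos (max m n)]
      _ ≤ _ := h_sep m n hmn x y
  · calc dist (h n x) (h n y) ≤ C * max D 1 * s (min n m) := by
          rw [h_dist, mul_assoc, mul_assoc]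
          gcongr C * ?_
          nlinarith [hD x y, le_max_left D 1, hanti (min_le_left n m), hpos n,
            dist_nonneg (x := x) (y := y)]
      _ ≤ _ := h_sep n m hmn.symm z w

end UnitCube

theorem summable_nat_add_one_rpow_neg {p : ℝ} (hp : 1 < p) :
    Summable fun n : ℕ => ((n : ℝ) + 1) ^ (-p) := by
  have := (summable_nat_add_iff 1).2 (Real.summable_nat_rpow.2 (neg_lt_neg hp))
  exact_mod_cast this

theorem stmt19_general (d : ℕ) (hd : 1 ≤ d) :
    ∀ d' : ℝ, (d : ℝ) < d' →
      ∃ C : ℝ, 0 < C ∧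
        ∃ h : ℕ → UnitCube d → UnitCube d,
          (∀ n, ∀ x y : UnitCube d,
            dist (h n x) (h n y) = C * ((n : ℝ) + 1) ^ (-d') * dist x y) ∧
          (∀ m n : ℕ, m ≠ n → ∀ x y : UnitCube d,
            C * ((max m n : ℕ) + 1 : ℝ) ^ (-d') ≤ dist (h m x) (h n y)) ∧
          ∃ H : (ℕ → UnitCube d) → NonemptyCompacts (UnitCube d),
            (∀ x : ℕ → UnitCube d,
              (H x : Set (UnitCube d)) = closure (Set.range fun n => h n (x n))) ∧
            (∀ x y : ℕ → UnitCube d,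
              dist (H x) (H y) =
                C * ⨆ n : ℕ, ((n : ℝ) + 1) ^ (-d') * dist (x n) (y n)) := by
  intro d' hd'
  have hd'1 : 1 < d' := lt_of_le_of_lt (by exact_mod_cast hd) hd'
  set s : ℕ → ℝ := fun n => ((n : ℝ) + 1) ^ (-d')
  have hs_pos : ∀ n, 0 < s n := fun n => by positivity
  have hs_anti : Antitone s := fun m n hmn =>
    Real.rpow_le_rpow_of_nonpos (by positivity) (by gcongr) (by linarith)
  obtain ⟨C, hC, h, h_dist, h_sep, h_far⟩ := UnitCube.exists_separated_homotheties hd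
    (summable_nat_add_one_rpow_neg hd'1) hs_pos hs_anti
  refine ⟨C, hC, h, h_dist, h_sep,
    fun x => ⟨⟨closure (range fun n => h n (x n)), isClosed_closure.isCompact⟩,
      (range_nonempty _).closure⟩, fun x => rfl, fun x y => ?_⟩
  rw [NonemptyCompacts.dist_eq]
  change hausdorffDist (closure _) (closure _) = _
  rw [hausdorffDist_closure_range_eq_iSup h_far, Real.mul_iSup_of_nonneg hC.le]
  simp only [h_dist, mul_assoc]

/-- if `X` contains a bi-Lipschitz image of the cube `I^d`, then for
every `d' > d` there are `C > 0` and homotheties `h_n : I^d → I^d` of ratio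
`C·n^{-d'}`, with images pairwise separated by at least `C·n^{-d'}`, such that
`x̄ ↦ closure {h_n(x̄_n)}` is a homothetic embedding of ratio `C` from the Banach
cube `BC(I^d, ∞, (n^{-d'}))` into the space of closed subsets of `I^d` with the
Hausdorff metric. (Indices are shifted by one so that they start at `1`.) -/
theorem stmt19 {X : Type*} [MetricSpace X] (d : ℕ) (hd : 1 ≤ d)
    (φ : UnitCube d → X) (c₁ c₂ : ℝ) (hc₁ : 0 < c₁) (hc₂ : 0 < c₂)
    (hφ : ∀ x y : UnitCube d,
      c₁ * dist x y ≤ dist (φ x) (φ y) ∧ dist (φ x) (φ y) ≤ c₂ * dist x y) :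
    ∀ d' : ℝ, (d : ℝ) < d' →
      ∃ C : ℝ, 0 < C ∧
        ∃ h : ℕ → UnitCube d → UnitCube d,
          (∀ n, ∀ x y : UnitCube d,
            dist (h n x) (h n y) = C * ((n : ℝ) + 1) ^ (-d') * dist x y) ∧
          (∀ m n : ℕ, m ≠ n → ∀ x y : UnitCube d,
            C * ((max m n : ℕ) + 1 : ℝ) ^ (-d') ≤ dist (h m x) (h n y)) ∧
          ∃ H : (ℕ → UnitCube d) → NonemptyCompacts (UnitCube d),
            (∀ x : ℕ → UnitCube d,
              (H x : Set (UnitCube d)) = closure (Set.range fun n => h n (x n))) ∧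
            (∀ x y : ℕ → UnitCube d,
              dist (H x) (H y) =
                C * ⨆ n : ℕ, ((n : ℝ) + 1) ^ (-d') * dist (x n) (y n)) :=
  stmt19_general d hd
end
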